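/- arXiv:1607.04709 — 2 statements merged into one kernel-verified Lean document; each statement's English description precedes it below -/
import Mathlib

section
/- Let Ω̄ be the closure of a bounded domain in ℝⁿ, let A be a σ-compact, locally compact, non-compact metric space, let L ∈ C(Ω̄×A) be coercive (for every M ∈ ℝ there is a compact K ⊆ A with L ≥ M on Ω̄×(A∖K)), let μ be a nonnegative Radon measure on Ω̄×A with μ(Ω̄×A) > 0, and let m ∈ ℝ with m > ⟨μ, L⟩ (in particular L is μ-integrable). Then there exists a nonnegative Radon measure μ̃ on Ω̄×A such that: (i) μ̃(Ω̄×A) = μ(Ω̄×A); (ii) ⟨μ̃, L⟩ = m; (iii) ⟨μ̃, ψ⟩ = ⟨μ, ψ⟩ for every ψ ∈ C(Ω̄), where ψ is regarded as the function (x,α) ↦ ψ(x) on Ω̄×A. -/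
open MeasureTheory Filter Topology Set

noncomputable section

/-- Points of `ℝⁿ`. -/
abbrev EucV (n : ℕ) := Fin n → ℝ

/-- Fully nonlinear operators `F = F(x, p, X)` on `ℝⁿ × ℝⁿ × Sⁿ`. -/
abbrev Op (n : ℕ) := EucV n → EucV n → Matrix (Fin n) (Fin n) ℝ → ℝ

/-- The gradient vector `Dϕ(x)` of a test function. -/
def gradV {n : ℕ} (ϕ : EucV n → ℝ) (x : EucV n) : EucV n :=
  fun i => fderiv ℝ ϕ x (Pi.single i 1)

/-- The Hessian matrix `D²ϕ(x)` of a test function. -/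
def hessM {n : ℕ} (ϕ : EucV n → ℝ) (x : EucV n) : Matrix (Fin n) (Fin n) ℝ :=
  Matrix.of fun i j => fderiv ℝ (fun y => fderiv ℝ ϕ y (Pi.single j (1 : ℝ))) x (Pi.single i 1)

/-- `u` is a viscosity subsolution of `lam * u + G[u] = c` at every point of `S`,
with test maxima taken relative to `D`. -/
def SubsolOn {n : ℕ} (D S : Set (EucV n)) (lam : ℝ) (G : Op n) (c : EucV n → ℝ)
    (u : EucV n → ℝ) : Prop :=
  ∀ ϕ : EucV n → ℝ, ContDiff ℝ 2 ϕ → ∀ x ∈ S,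
    IsLocalMaxOn (fun y => u y - ϕ y) D x →
      lam * u x + G x (gradV ϕ x) (hessM ϕ x) ≤ c x

/-- `u` is a viscosity supersolution of `lam * u + G[u] = c` at every point of `S`,
with test minima taken relative to `D`. -/
def SupersolOn {n : ℕ} (D S : Set (EucV n)) (lam : ℝ) (G : Op n) (c : EucV n → ℝ)
    (u : EucV n → ℝ) : Prop :=
  ∀ ϕ : EucV n → ℝ, ContDiff ℝ 2 ϕ → ∀ x ∈ S,
    IsLocalMinOn (fun y => u y - ϕ y) D x →
      c x ≤ lam * u x + G x (gradV ϕ x) (hessM ϕ x)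

/-- The operator `F_φ` for `φ = t·L + χ ∈ Φ⁺`, namely
`F_φ(x,p,X) = t·F(x, t⁻¹p, t⁻¹X) − χ(x)`. -/
def Fphi {n : ℕ} (F : Op n) (t : ℝ) (χ : EucV n → ℝ) : Op n :=
  fun x p X => t * F x (t⁻¹ • p) (t⁻¹ • X) - χ x

/-- `Ω` is a bounded domain: open, connected and bounded. -/
def BoundedDomain {n : ℕ} (Ω : Set (EucV n)) : Prop :=
  IsOpen Ω ∧ IsConnected Ω ∧ Bornology.IsBounded Ω

/-- Solution of the state constraint problem (S_lam):
subsolution of `lam u + F[u] = 0` in `Ω`, supersolution on `Ω̄`. -/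
def SolS {n : ℕ} (Ω : Set (EucV n)) (F : Op n) (lam : ℝ) (v : EucV n → ℝ) : Prop :=
  SubsolOn (closure Ω) Ω lam F (fun _ => 0) v ∧
    SupersolOn (closure Ω) (closure Ω) lam F (fun _ => 0) v

/-- Solution of the state constraint ergodic problem (ES_c). -/
def SolES {n : ℕ} (Ω : Set (EucV n)) (F : Op n) (c : ℝ) (u : EucV n → ℝ) : Prop :=
  SubsolOn (closure Ω) Ω 0 F (fun _ => c) u ∧
    SupersolOn (closure Ω) (closure Ω) 0 F (fun _ => c) u

/-- (CPS): comparison principle for the state constraint problem. -/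
def CondCPS {n : ℕ} (Ω : Set (EucV n)) (F : Op n) : Prop :=
  ∀ lam : ℝ, 0 < lam → ∀ v w : EucV n → ℝ,
    ContinuousOn v (closure Ω) → ContinuousOn w (closure Ω) →
      SubsolOn (closure Ω) Ω lam F (fun _ => 0) v →
        SupersolOn (closure Ω) (closure Ω) lam F (fun _ => 0) w →
          ∀ x ∈ closure Ω, v x ≤ w x

/-- (SLS): `vfam lam` is, for each `lam > 0`, a (continuous) solution of (S_lam). -/
def CondSLS {n : ℕ} (Ω : Set (EucV n)) (F : Op n) (vfam : ℝ → EucV n → ℝ) : Prop :=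
  ∀ lam : ℝ, 0 < lam → ContinuousOn (vfam lam) (closure Ω) ∧ SolS Ω F lam (vfam lam)

/-- (EC): the family `{vfam lam}_{lam>0}` is equicontinuous on `Ω̄`. -/
def CondEC {n : ℕ} (Ω : Set (EucV n)) (vfam : ℝ → EucV n → ℝ) : Prop :=
  ∀ ε : ℝ, 0 < ε → ∃ δ : ℝ, 0 < δ ∧ ∀ lam : ℝ, 0 < lam →
    ∀ x ∈ closure Ω, ∀ y ∈ closure Ω, dist x y < δ → |vfam lam x - vfam lam y| < ε

/-- (CP_loc): local comparison principle for `lam u + F_φ[u] = 0`, `φ ∈ Φ⁺`. -/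
def CondCPloc {n : ℕ} (Ω : Set (EucV n)) (F : Op n) : Prop :=
  ∀ lam : ℝ, 0 < lam → ∀ t : ℝ, 0 < t → ∀ χ : EucV n → ℝ, ContinuousOn χ (closure Ω) →
    ∀ U : Set (EucV n), IsOpen U → U ⊆ Ω →
      ∀ v w : EucV n → ℝ, ContinuousOn v (closure U) → ContinuousOn w (closure U) →
        SubsolOn (closure U) U lam (Fphi F t χ) (fun _ => 0) v →
          SupersolOn (closure U) U lam (Fphi F t χ) (fun _ => 0) w →
            (∀ x ∈ frontier U, v x ≤ w x) → ∀ x ∈ closure U, v x ≤ w x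

/-- Subsolution of the Dirichlet problem `lam u + G[u] = χ` in `Ω`, `u = ψ` on `∂Ω`. -/
def DSubsol {n : ℕ} (Ω : Set (EucV n)) (G : Op n) (lam : ℝ) (χ ψ u : EucV n → ℝ) : Prop :=
  SubsolOn (closure Ω) Ω lam G χ u ∧ ∀ x ∈ frontier Ω, u x ≤ ψ x

/-- Supersolution of the Dirichlet problem `lam u + G[u] = χ` in `Ω`, `u = ψ` on `∂Ω`
(in the generalized viscosity sense at the boundary). -/
def DSupersol {n : ℕ} (Ω : Set (EucV n)) (G : Op n) (lam : ℝ) (χ ψ w : EucV n → ℝ) : Prop :=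
  ∀ ϕ : EucV n → ℝ, ContDiff ℝ 2 ϕ → ∀ x ∈ closure Ω,
    IsLocalMinOn (fun y => w y - ϕ y) (closure Ω) x →
      (x ∈ Ω → χ x ≤ lam * w x + G x (gradV ϕ x) (hessM ϕ x)) ∧
      (x ∈ frontier Ω → χ x ≤ lam * w x + G x (gradV ϕ x) (hessM ϕ x) ∨ ψ x ≤ w x)

/-- Solution of the Dirichlet problem (D_lam). -/
def SolD {n : ℕ} (Ω : Set (EucV n)) (F : Op n) (g : EucV n → ℝ) (lam : ℝ)
    (v : EucV n → ℝ) : Prop :=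
  DSubsol Ω F lam (fun _ => 0) g v ∧ DSupersol Ω F lam (fun _ => 0) g v

/-- Solution of the ergodic Dirichlet problem (ED_c). -/
def SolED {n : ℕ} (Ω : Set (EucV n)) (F : Op n) (g : EucV n → ℝ) (c : ℝ)
    (u : EucV n → ℝ) : Prop :=
  DSubsol Ω F 0 (fun _ => c) g u ∧ DSupersol Ω F 0 (fun _ => c) g u

/-- (CPD): comparison principle for the Dirichlet problem
`lam u + F[u] = χ` in `Ω`, `u = ψ` on `∂Ω`. -/
def CondCPD {n : ℕ} (Ω : Set (EucV n)) (F : Op n) : Prop :=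
  ∀ lam : ℝ, 0 < lam → ∀ χ ψ : EucV n → ℝ, ContinuousOn χ (closure Ω) →
    ContinuousOn ψ (frontier Ω) →
      ∀ u w : EucV n → ℝ, ContinuousOn u (closure Ω) → ContinuousOn w (closure Ω) →
        DSubsol Ω F lam χ ψ u → DSupersol Ω F lam χ ψ w → ∀ x ∈ closure Ω, u x ≤ w x

/-- (SLD): `vfam lam` is, for each `lam > 0`, a (continuous) solution of (D_lam). -/
def CondSLD {n : ℕ} (Ω : Set (EucV n)) (F : Op n) (g : EucV n → ℝ)
    (vfam : ℝ → EucV n → ℝ) : Prop :=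
  ∀ lam : ℝ, 0 < lam → ContinuousOn (vfam lam) (closure Ω) ∧ SolD Ω F g lam (vfam lam)

/-- Member of `F^D(λ)`: a triple `(φ, ψ, u)` with `φ = t·L + χ ∈ Φ⁺`,
`u` a subsolution of `(D_{λ,φ,ψ})`. -/
def memFD {n : ℕ} (Ω : Set (EucV n)) (F : Op n) (lam t : ℝ) (χ ψ u : EucV n → ℝ) : Prop :=
  0 < t ∧ ContinuousOn χ (closure Ω) ∧ ContinuousOn ψ (frontier Ω) ∧
    ContinuousOn u (closure Ω) ∧
    SubsolOn (closure Ω) Ω lam (Fphi F t χ) (fun _ => 0) u ∧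
    ∀ x ∈ frontier Ω, u x ≤ ψ x

/-- Member of `F^D(M,λ)`: additionally `(φ,ψ) ∈ Ψ⁺(M)`. -/
def memFDM {n : ℕ} (Ω : Set (EucV n)) (F : Op n) (M lam t : ℝ) (χ ψ u : EucV n → ℝ) : Prop :=
  memFD Ω F lam t χ ψ u ∧ (∀ x ∈ closure Ω, |χ x| < t * M) ∧
    ∀ x ∈ frontier Ω, |ψ x| < t * M

/-- Member of `F^S(λ)`: a pair `(φ, u)` with `φ = t·L + χ ∈ Φ⁺` and `u` a
subsolution of `λ u + F_φ[u] = 0` in `Ω`. -/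
def memFS {n : ℕ} (Ω : Set (EucV n)) (F : Op n) (lam t : ℝ) (χ u : EucV n → ℝ) : Prop :=
  0 < t ∧ ContinuousOn χ (closure Ω) ∧ ContinuousOn u (closure Ω) ∧
    SubsolOn (closure Ω) Ω lam (Fphi F t χ) (fun _ => 0) u

/-- Viscosity subsolution of the Neumann problem `lam u + G[u] = 0` in `Sint`,
`γ·Du = ψ` on `Sbb`, with test maxima relative to `D`. -/
def NSubsol {n : ℕ} (γ : EucV n → EucV n) (G : Op n) (lam : ℝ) (ψ u : EucV n → ℝ)
    (D Sint Sbb : Set (EucV n)) : Prop :=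
  ∀ ϕ : EucV n → ℝ, ContDiff ℝ 2 ϕ → ∀ x, IsLocalMaxOn (fun y => u y - ϕ y) D x →
    (x ∈ Sint → lam * u x + G x (gradV ϕ x) (hessM ϕ x) ≤ 0) ∧
    (x ∈ Sbb → lam * u x + G x (gradV ϕ x) (hessM ϕ x) ≤ 0 ∨
      dotProduct (γ x) (gradV ϕ x) ≤ ψ x)

/-- Viscosity supersolution of the Neumann problem. -/
def NSupersol {n : ℕ} (γ : EucV n → EucV n) (G : Op n) (lam : ℝ) (ψ w : EucV n → ℝ)
    (D Sint Sbb : Set (EucV n)) : Prop :=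
  ∀ ϕ : EucV n → ℝ, ContDiff ℝ 2 ϕ → ∀ x, IsLocalMinOn (fun y => w y - ϕ y) D x →
    (x ∈ Sint → 0 ≤ lam * w x + G x (gradV ϕ x) (hessM ϕ x)) ∧
    (x ∈ Sbb → 0 ≤ lam * w x + G x (gradV ϕ x) (hessM ϕ x) ∨
      ψ x ≤ dotProduct (γ x) (gradV ϕ x))

/-- Solution of the Neumann problem (N_lam). -/
def SolN {n : ℕ} (Ω : Set (EucV n)) (γ : EucV n → EucV n) (F : Op n) (g : EucV n → ℝ)
    (lam : ℝ) (v : EucV n → ℝ) : Prop :=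
  NSubsol γ F lam g v (closure Ω) Ω (frontier Ω) ∧
    NSupersol γ F lam g v (closure Ω) Ω (frontier Ω)

/-- Solution of the ergodic Neumann problem (EN_c). -/
def SolEN {n : ℕ} (Ω : Set (EucV n)) (γ : EucV n → EucV n) (F : Op n) (g : EucV n → ℝ)
    (c : ℝ) (u : EucV n → ℝ) : Prop :=
  NSubsol γ (fun x p X => F x p X - c) 0 g u (closure Ω) Ω (frontier Ω) ∧
    NSupersol γ (fun x p X => F x p X - c) 0 g u (closure Ω) Ω (frontier Ω)

/-- (OG): `Ω` has `C¹` boundary and `γ` is an oblique (outward) field on `∂Ω`: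
locally `Ω = {h < 0}`, `∂Ω = {h = 0}` for a `C¹` defining function `h` with
nonvanishing gradient (the outward normal direction), and `γ · Dh > 0`. -/
def CondOG {n : ℕ} (Ω : Set (EucV n)) (γ : EucV n → EucV n) : Prop :=
  ContinuousOn γ (frontier Ω) ∧
  ∀ x ∈ frontier Ω, ∃ (U : Set (EucV n)) (h : EucV n → ℝ), IsOpen U ∧ x ∈ U ∧
    ContDiff ℝ 1 h ∧ (∀ y ∈ U, (y ∈ Ω ↔ h y < 0)) ∧
    (∀ y ∈ U, (y ∈ frontier Ω ↔ h y = 0)) ∧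
    ∀ y ∈ U ∩ frontier Ω, gradV h y ≠ 0 ∧ 0 < dotProduct (γ y) (gradV h y)

/-- (CPN_loc): localized comparison principle for the Neumann problem with data in `Ψ⁺`. -/
def CondCPNloc {n : ℕ} (Ω : Set (EucV n)) (γ : EucV n → EucV n) (F : Op n) : Prop :=
  ∀ lam : ℝ, 0 < lam → ∀ t : ℝ, 0 < t → ∀ χ ψ : EucV n → ℝ,
    ContinuousOn χ (closure Ω) → ContinuousOn ψ (frontier Ω) →
      ∀ W : Set (EucV n), IsOpen W →
        ∀ v w : EucV n → ℝ,
          ContinuousOn v (closure (W ∩ closure Ω)) →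
          ContinuousOn w (closure (W ∩ closure Ω)) →
          NSubsol γ (Fphi F t χ) lam ψ v (closure (W ∩ closure Ω)) (W ∩ Ω) (W ∩ frontier Ω) →
          NSupersol γ (Fphi F t χ) lam ψ w (closure (W ∩ closure Ω)) (W ∩ Ω) (W ∩ frontier Ω) →
          (∀ x ∈ Ω ∩ frontier (W ∩ closure Ω), v x ≤ w x) →
          ∀ x ∈ closure (W ∩ closure Ω), v x ≤ w x

/-- Member of `F^N(λ)`: a triple `(φ, ψ, u)` with `φ = t·L + χ ∈ Φ⁺` and `u` a
subsolution of the Neumann problem `(N_{λ,φ,ψ})`. -/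
def memFN {n : ℕ} (Ω : Set (EucV n)) (γ : EucV n → EucV n) (F : Op n) (lam t : ℝ)
    (χ ψ u : EucV n → ℝ) : Prop :=
  0 < t ∧ ContinuousOn χ (closure Ω) ∧ ContinuousOn ψ (frontier Ω) ∧
    ContinuousOn u (closure Ω) ∧
    NSubsol γ (Fphi F t χ) lam ψ u (closure Ω) Ω (frontier Ω)

/-- (SLN): `vfam lam` is, for each `lam > 0`, a (continuous) solution of (N_lam). -/
def CondSLN {n : ℕ} (Ω : Set (EucV n)) (γ : EucV n → EucV n) (F : Op n) (g : EucV n → ℝ)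
    (vfam : ℝ → EucV n → ℝ) : Prop :=
  ∀ lam : ℝ, 0 < lam → ContinuousOn (vfam lam) (closure Ω) ∧ SolN Ω γ F g lam (vfam lam)

section withA

variable {n : ℕ} {A : Type*} [MetricSpace A]

/-- (F1): `F` is the Bellman sup of the linear operators with data `a, b, L`. -/
def CondF1 (Ω : Set (EucV n)) (a : EucV n → A → Matrix (Fin n) (Fin n) ℝ)
    (b : EucV n → A → EucV n) (L : EucV n → A → ℝ) (F : Op n) : Prop :=
  ∀ x ∈ closure Ω, ∀ (p : EucV n) (X : Matrix (Fin n) (Fin n) ℝ),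
    IsLUB (Set.range fun α : A =>
      -Matrix.trace (a x α * X) - dotProduct (b x α) p - L x α) (F x p X)

/-- (F2): `F` is continuous on `Ω̄ × ℝⁿ × Sⁿ`. -/
def CondF2 (Ω : Set (EucV n)) (F : Op n) : Prop :=
  ContinuousOn (fun q : EucV n × EucV n × Matrix (Fin n) (Fin n) ℝ => F q.1 q.2.1 q.2.2)
    ((closure Ω) ×ˢ (Set.univ : Set (EucV n × Matrix (Fin n) (Fin n) ℝ)))

/-- The data `a, b, L` are continuous on `Ω̄ × A` and `a` is nonnegative-definite. -/
def CondData (Ω : Set (EucV n)) (a : EucV n → A → Matrix (Fin n) (Fin n) ℝ)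
    (b : EucV n → A → EucV n) (L : EucV n → A → ℝ) : Prop :=
  ContinuousOn (fun q : EucV n × A => a q.1 q.2) ((closure Ω) ×ˢ (Set.univ : Set A)) ∧
  ContinuousOn (fun q : EucV n × A => b q.1 q.2) ((closure Ω) ×ˢ (Set.univ : Set A)) ∧
  ContinuousOn (fun q : EucV n × A => L q.1 q.2) ((closure Ω) ×ˢ (Set.univ : Set A)) ∧
  ∀ x ∈ closure Ω, ∀ α : A, (a x α).PosSemidef

/-- (L): the running cost `L` is coercive (`L = +∞` at infinity). -/
def CondL (Ω : Set (EucV n)) (L : EucV n → A → ℝ) : Prop :=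
  ∀ M : ℝ, ∃ K : Set A, IsCompact K ∧ ∀ x ∈ closure Ω, ∀ α ∉ K, M ≤ L x α

variable [MeasurableSpace A]

/-- The measure `μ` on `ℝⁿ × A` is carried by `Ω̄ × A`. -/
def SuppInBar (Ω : Set (EucV n)) (μ : Measure (EucV n × A)) : Prop :=
  μ ((closure Ω ×ˢ (Set.univ : Set A))ᶜ) = 0

/-- The pairing `⟨μ, L⟩`. -/
def intL (L : EucV n → A → ℝ) (μ : Measure (EucV n × A)) : ℝ :=
  ∫ q : EucV n × A, L q.1 q.2 ∂μ

/-- `P^S`: Radon probability measures on `Ω̄ × A`. -/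
def PSset (Ω : Set (EucV n)) : Set (Measure (EucV n × A)) :=
  {μ | IsProbabilityMeasure μ ∧ SuppInBar Ω μ}

/-- `G^S(z,λ)'`: the dual cone of `G^S(z,λ)` in `R_L`. -/
def GSdual (Ω : Set (EucV n)) (L : EucV n → A → ℝ) (F : Op n) (z : EucV n) (lam : ℝ) :
    Set (Measure (EucV n × A)) :=
  {μ | Integrable (fun q : EucV n × A => L q.1 q.2) μ ∧
    ∀ (t : ℝ) (χ u : EucV n → ℝ), memFS Ω F lam t χ u →
      0 ≤ ∫ q : EucV n × A, (t * L q.1 q.2 + χ q.1 - lam * u z) ∂μ}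

/-- `P^D`: pairs `(μ₁, μ₂)` of nonnegative Radon measures on `Ω̄ × A` (integrating `L`)
and on `∂Ω`, with total mass one. -/
def PDset (Ω : Set (EucV n)) (L : EucV n → A → ℝ) :
    Set (Measure (EucV n × A) × Measure (EucV n)) :=
  {p | SuppInBar Ω p.1 ∧ Integrable (fun q : EucV n × A => L q.1 q.2) p.1 ∧
    p.2 ((frontier Ω)ᶜ) = 0 ∧ p.1 Set.univ + p.2 Set.univ = 1}

/-- `G^D(z,λ)'`: the dual cone of `G^D(z,λ)`. -/
def GDdual (Ω : Set (EucV n)) (L : EucV n → A → ℝ) (F : Op n) (z : EucV n) (lam : ℝ) :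
    Set (Measure (EucV n × A) × Measure (EucV n)) :=
  {p | Integrable (fun q : EucV n × A => L q.1 q.2) p.1 ∧
    ∀ (t : ℝ) (χ ψ u : EucV n → ℝ), memFD Ω F lam t χ ψ u →
      0 ≤ (∫ w : EucV n × A, (t * L w.1 w.2 + χ w.1 - lam * u z) ∂p.1) +
        ∫ x, lam * (ψ x - u z) ∂p.2}

/-- `G^D(M,z,λ)'`: the dual cone of `G^D(M,z,λ)`. -/
def GDdualM (Ω : Set (EucV n)) (L : EucV n → A → ℝ) (F : Op n) (M : ℝ) (z : EucV n)
    (lam : ℝ) : Set (Measure (EucV n × A) × Measure (EucV n)) :=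
  {p | Integrable (fun q : EucV n × A => L q.1 q.2) p.1 ∧
    ∀ (t : ℝ) (χ ψ u : EucV n → ℝ), memFDM Ω F M lam t χ ψ u →
      0 ≤ (∫ w : EucV n × A, (t * L w.1 w.2 + χ w.1 - lam * u z) ∂p.1) +
        ∫ x, lam * (ψ x - u z) ∂p.2}

/-- `G^D(z,λ)†`: triples `(ρ, μ₁, μ₂)` with `(μ₁,μ₂) ∈ P^D` and
`0 ≤ tρ + ⟨μ₁, tL+χ−λu(z)⟩ + λ⟨μ₂, ψ−u(z)⟩` for all `(tL+χ, ψ, u) ∈ F^D(λ)`. -/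
def GDdag (Ω : Set (EucV n)) (L : EucV n → A → ℝ) (F : Op n) (z : EucV n) (lam : ℝ) :
    Set (ℝ × Measure (EucV n × A) × Measure (EucV n)) :=
  {q | 0 ≤ q.1 ∧ (q.2.1, q.2.2) ∈ PDset Ω L ∧
    ∀ (t : ℝ) (χ ψ u : EucV n → ℝ), memFD Ω F lam t χ ψ u →
      0 ≤ t * q.1 + (∫ w : EucV n × A, (t * L w.1 w.2 + χ w.1 - lam * u z) ∂q.2.1) +
        lam * ∫ x, (ψ x - u z) ∂q.2.2}

/-- `G^D(M,z,λ)†`. -/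
def GDdagM (Ω : Set (EucV n)) (L : EucV n → A → ℝ) (F : Op n) (M : ℝ) (z : EucV n)
    (lam : ℝ) : Set (ℝ × Measure (EucV n × A) × Measure (EucV n)) :=
  {q | 0 ≤ q.1 ∧ (q.2.1, q.2.2) ∈ PDset Ω L ∧
    ∀ (t : ℝ) (χ ψ u : EucV n → ℝ), memFDM Ω F M lam t χ ψ u →
      0 ≤ t * q.1 + (∫ w : EucV n × A, (t * L w.1 w.2 + χ w.1 - lam * u z) ∂q.2.1) +
        lam * ∫ x, (ψ x - u z) ∂q.2.2}

/-- `P₁^D`: first marginals of elements of `P^D ∩ G^D(0)'`. -/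
def P1Dset (Ω : Set (EucV n)) (L : EucV n → A → ℝ) (F : Op n) :
    Set (Measure (EucV n × A)) :=
  {μ₁ | ∃ μ₂ : Measure (EucV n), (μ₁, μ₂) ∈ PDset Ω L ∧ (μ₁, μ₂) ∈ GDdual Ω L F 0 0}

/-- Weak convergence of pairs of measures, tested against `C_c(Ω̄ × A) × C(∂Ω)`. -/
def WeakConvD (Ω : Set (EucV n)) (ps : ℕ → Measure (EucV n × A) × Measure (EucV n))
    (p : Measure (EucV n × A) × Measure (EucV n)) : Prop :=
  ∀ φ : EucV n × A → ℝ, Continuous φ → HasCompactSupport φ →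
    ∀ ψ : EucV n → ℝ, ContinuousOn ψ (frontier Ω) →
      Tendsto (fun k => (∫ q, φ q ∂(ps k).1) + ∫ x, ψ x ∂(ps k).2) atTop
        (𝓝 ((∫ q, φ q ∂p.1) + ∫ x, ψ x ∂p.2))

/-- `P^N`: pairs of a Radon probability measure on `Ω̄ × A` integrating `L` and a
nonnegative Radon measure on `∂Ω`. -/
def PNset (Ω : Set (EucV n)) (L : EucV n → A → ℝ) :
    Set (Measure (EucV n × A) × Measure (EucV n)) :=
  {p | IsProbabilityMeasure p.1 ∧ SuppInBar Ω p.1 ∧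
    Integrable (fun q : EucV n × A => L q.1 q.2) p.1 ∧
    IsFiniteMeasure p.2 ∧ p.2 ((frontier Ω)ᶜ) = 0}

/-- `G^N(z,λ)'`: the dual cone of `G^N(z,λ)`. -/
def GNdual (Ω : Set (EucV n)) (γ : EucV n → EucV n) (L : EucV n → A → ℝ) (F : Op n)
    (z : EucV n) (lam : ℝ) : Set (Measure (EucV n × A) × Measure (EucV n)) :=
  {p | Integrable (fun q : EucV n × A => L q.1 q.2) p.1 ∧
    ∀ (t : ℝ) (χ ψ u : EucV n → ℝ), memFN Ω γ F lam t χ ψ u →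
      0 ≤ (∫ w : EucV n × A, (t * L w.1 w.2 + χ w.1 - lam * u z) ∂p.1) + ∫ x, ψ x ∂p.2}

end withA

end

/-- Lemma 2.3 ("mod"): modification of a measure keeping mass and marginal on `Ω̄`
while raising the value of `⟨·, L⟩` to a prescribed level `m`. -/
theorem stmt2 {n : ℕ} {A : Type*} [MetricSpace A] [Nonempty A]
    [SigmaCompactSpace A] [LocallyCompactSpace A] [MeasurableSpace A] [BorelSpace A]
    (hA : ¬ CompactSpace A)
    (Ω : Set (EucV n)) (hΩ : BoundedDomain Ω)
    (L : EucV n → A → ℝ)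
    (hLc : ContinuousOn (fun q : EucV n × A => L q.1 q.2) ((closure Ω) ×ˢ (Set.univ : Set A)))
    (hLcoer : CondL Ω L)
    (μ : Measure (EucV n × A)) (hfin : IsFiniteMeasure μ) (hsupp : SuppInBar Ω μ)
    (hpos : 0 < μ Set.univ)
    (hint : Integrable (fun q : EucV n × A => L q.1 q.2) μ)
    (m : ℝ) (hm : intL L μ < m) :
    ∃ μt : Measure (EucV n × A), IsFiniteMeasure μt ∧ SuppInBar Ω μt ∧
      μt Set.univ = μ Set.univ ∧
      Integrable (fun q : EucV n × A => L q.1 q.2) μt ∧ intL L μt = m ∧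
      ∀ ψ : EucV n → ℝ, ContinuousOn ψ (closure Ω) →
        (∫ q : EucV n × A, ψ q.1 ∂μt) = ∫ q : EucV n × A, ψ q.1 ∂μ := by
  classical
  have hclosed : IsClosed (closure Ω) := isClosed_closure
  have hcomp : IsCompact (closure Ω) := hΩ.2.2.isCompact_closure
  set S : Set (EucV n × A) := (closure Ω) ×ˢ (Set.univ : Set A) with hS
  have hSmeas : MeasurableSet S := hclosed.measurableSet.prod MeasurableSet.univ
  have hμS : μ Sᶜ = 0 := hsupp
  have haeS : ∀ᵐ q ∂μ, q ∈ S := by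
    rw [ae_iff]
    simpa [Set.compl_def] using hμS
  have hrestr : μ.restrict S = μ := Measure.restrict_eq_self_of_ae_mem haeS
  -- mass
  set c : ℝ := (μ Set.univ).toReal with hc
  have hcpos : 0 < c := ENNReal.toReal_pos (ne_of_gt hpos) (measure_ne_top μ _)
  set M : ℝ := (m + 1) / c with hM
  obtain ⟨K, hK, hKge⟩ := hLcoer M
  obtain ⟨α₀, hα₀⟩ : ∃ α, α ∉ K := by
    by_contra h
    push_neg at h
    exact hA ⟨(Set.eq_univ_of_forall h) ▸ hK⟩
  -- the measure ν
  have hφmeas : Measurable (fun q : EucV n × A => (q.1, α₀)) :=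
    measurable_fst.prodMk measurable_const
  set ν : Measure (EucV n × A) := μ.map (fun q => (q.1, α₀)) with hν
  have hνfin : IsFiniteMeasure ν := by
    constructor
    rw [hν, Measure.map_apply hφmeas MeasurableSet.univ]
    exact measure_lt_top μ _
  have hνuniv : ν Set.univ = μ Set.univ := by
    rw [hν, Measure.map_apply hφmeas MeasurableSet.univ]; rfl
  have hνS : ν Sᶜ = 0 := by
    rw [hν, Measure.map_apply hφmeas hSmeas.compl]
    have : (fun q : EucV n × A => (q.1, α₀)) ⁻¹' Sᶜ = Sᶜ := by
      ext q; simp [hS, Set.mem_prod]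
    rw [this]; exact hμS
  have haeSν : ∀ᵐ q ∂ν, q ∈ S := by
    rw [ae_iff]
    simpa [Set.compl_def] using hνS
  have hrestrν : ν.restrict S = ν := Measure.restrict_eq_self_of_ae_mem haeSν
  -- measurability of the map L on S
  have hLmeasν : AEStronglyMeasurable (fun q : EucV n × A => L q.1 q.2) ν := by
    have := hLc.aestronglyMeasurable hSmeas (μ := ν)
    rwa [hrestrν] at this
  -- the function q ↦ L q.1 α₀
  have hf₀cont : ContinuousOn (fun q : EucV n × A => L q.1 α₀) S := by
    have hmap : ContinuousOn (fun q : EucV n × A => (q.1, α₀)) S :=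
      (continuous_fst.prodMk continuous_const).continuousOn
    exact hLc.comp hmap (fun q hq => ⟨hq.1, trivial⟩)
  have hf₀meas : AEStronglyMeasurable (fun q : EucV n × A => L q.1 α₀) μ := by
    have := hf₀cont.aestronglyMeasurable hSmeas (μ := μ)
    rwa [hrestr] at this
  -- bound for L (·, α₀) on closure Ω
  have hgcont : ContinuousOn (fun x : EucV n => L x α₀) (closure Ω) := by
    have hmap : ContinuousOn (fun x : EucV n => ((x, α₀) : EucV n × A)) (closure Ω) :=
      (continuous_id.prodMk continuous_const).continuousOn
    exact hLc.comp hmap (fun x hx => ⟨hx, trivial⟩)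
  obtain ⟨C, hCb⟩ := hcomp.exists_bound_of_continuousOn hgcont
  have hf₀int : Integrable (fun q : EucV n × A => L q.1 α₀) μ := by
    refine ⟨hf₀meas, HasFiniteIntegral.of_bounded (C := C) ?_⟩
    filter_upwards [haeS] with q hq
    exact hCb q.1 hq.1
  -- I₁ and its lower bound
  set I₀ : ℝ := intL L μ with hI₀
  set I₁ : ℝ := ∫ q : EucV n × A, L q.1 α₀ ∂μ with hI₁
  have hMc : M * c = m + 1 := div_mul_cancel₀ _ (ne_of_gt hcpos)
  have hI₁ge : m + 1 ≤ I₁ := by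
    have hmono : (∫ _ : EucV n × A, M ∂μ) ≤ I₁ := by
      refine integral_mono_ae (integrable_const _) hf₀int ?_
      filter_upwards [haeS] with q hq
      exact hKge q.1 hq.1 α₀ hα₀
    have : (∫ _ : EucV n × A, M ∂μ) = c * M := by
      rw [integral_const]; simp [hc, smul_eq_mul, measureReal_def]
    rw [this] at hmono
    linarith [hMc, hmono]
  have hI₁m : m < I₁ := by linarith
  -- θ
  set θ : ℝ := (m - I₀) / (I₁ - I₀) with hθ
  have hden : 0 < I₁ - I₀ := by linarith
  have hθpos : 0 < θ := div_pos (by linarith) hden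
  have hθlt : θ < 1 := (div_lt_one hden).2 (by linarith)
  have hθ1 : 0 ≤ 1 - θ := by linarith
  -- the modified measure
  set a : ENNReal := ENNReal.ofReal (1 - θ) with ha
  set b : ENNReal := ENNReal.ofReal θ with hb
  have hane : a ≠ ⊤ := ENNReal.ofReal_ne_top
  have hbne : b ≠ ⊤ := ENNReal.ofReal_ne_top
  set μt : Measure (EucV n × A) := a • μ + b • ν with hμt
  have hμtfin : IsFiniteMeasure μt := by
    constructor
    rw [hμt]
    simp only [Measure.add_apply, Measure.smul_apply, smul_eq_mul]
    exact ENNReal.add_lt_top.2 ⟨ENNReal.mul_lt_top hane.lt_top (measure_lt_top μ _),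
      ENNReal.mul_lt_top hbne.lt_top (measure_lt_top ν _)⟩
  have hab : a + b = 1 := by
    rw [ha, hb, ← ENNReal.ofReal_add hθ1 (le_of_lt hθpos)]
    norm_num
  have hμtuniv : μt Set.univ = μ Set.univ := by
    rw [hμt]
    simp only [Measure.add_apply, Measure.smul_apply, smul_eq_mul]
    rw [hνuniv, ← add_mul, hab, one_mul]
  have hμtS : SuppInBar Ω μt := by
    show μt Sᶜ = 0
    rw [hμt]
    simp only [Measure.add_apply, Measure.smul_apply, smul_eq_mul]
    rw [hμS, hνS]; simp
  -- integrability of L w.r.t. ν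
  have hLν : Integrable (fun q : EucV n × A => L q.1 q.2) ν := by
    rw [hν, integrable_map_measure (by rw [← hν]; exact hLmeasν) hφmeas.aemeasurable]
    exact hf₀int
  have hLνval : (∫ q : EucV n × A, L q.1 q.2 ∂ν) = I₁ := by
    rw [hν, integral_map hφmeas.aemeasurable (by rw [← hν]; exact hLmeasν)]
  -- integrability of L w.r.t. μt
  have hLμt : Integrable (fun q : EucV n × A => L q.1 q.2) μt := by
    rw [hμt]
    exact (hint.smul_measure hane).add_measure (hLν.smul_measure hbne)
  -- the value of ⟨μt, L⟩
  have haR : a.toReal = 1 - θ := ENNReal.toReal_ofReal hθ1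
  have hbR : b.toReal = θ := ENNReal.toReal_ofReal (le_of_lt hθpos)
  have hintval : intL L μt = m := by
    rw [intL, hμt, integral_add_measure (hint.smul_measure hane) (hLν.smul_measure hbne),
      integral_smul_measure, integral_smul_measure, hLνval, haR, hbR]
    show (1 - θ) * I₀ + θ * I₁ = m
    have : θ * (I₁ - I₀) = m - I₀ := div_mul_cancel₀ _ (ne_of_gt hden)
    nlinarith [this]
  refine ⟨μt, hμtfin, hμtS, hμtuniv, hLμt, hintval, ?_⟩
  -- the marginal property
  intro ψ hψ
  obtain ⟨D, hDb⟩ := hcomp.exists_bound_of_continuousOn hψ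
  have hψcont : ContinuousOn (fun q : EucV n × A => ψ q.1) S :=
    hψ.comp continuous_fst.continuousOn (fun q hq => hq.1)
  have hψmeasμ : AEStronglyMeasurable (fun q : EucV n × A => ψ q.1) μ := by
    have := hψcont.aestronglyMeasurable hSmeas (μ := μ)
    rwa [hrestr] at this
  have hψmeasν : AEStronglyMeasurable (fun q : EucV n × A => ψ q.1) ν := by
    have := hψcont.aestronglyMeasurable hSmeas (μ := ν)
    rwa [hrestrν] at this
  have hψintμ : Integrable (fun q : EucV n × A => ψ q.1) μ := by
    refine ⟨hψmeasμ, HasFiniteIntegral.of_bounded (C := D) ?_⟩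
    filter_upwards [haeS] with q hq
    exact hDb q.1 hq.1
  have hψintν : Integrable (fun q : EucV n × A => ψ q.1) ν := by
    refine ⟨hψmeasν, HasFiniteIntegral.of_bounded (C := D) ?_⟩
    filter_upwards [haeSν] with q hq
    exact hDb q.1 hq.1
  have hψν : (∫ q : EucV n × A, ψ q.1 ∂ν) = ∫ q : EucV n × A, ψ q.1 ∂μ := by
    rw [hν, integral_map hφmeas.aemeasurable (by rw [← hν]; exact hψmeasν)]
  rw [hμt, integral_add_measure (hψintμ.smul_measure hane) (hψintν.smul_measure hbne),
    integral_smul_measure, integral_smul_measure, hψν, haR, hbR, smul_eq_mul, smul_eq_mul]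
  ring
end

section
/- Assume (F1), (F2), (CPS), (SLS) and (EC). Then there exists a pair (u, c) ∈ C(Ω̄)×ℝ such that u is a solution of the state constraint ergodic problem (ES_c). Moreover the constant c is uniquely determined and is given by c = inf{ d ∈ ℝ : there exists v ∈ C(Ω̄) which is a viscosity subsolution of F[v] = d in Ω }. -/
set_option synthInstance.maxHeartbeats 1000000
set_option maxHeartbeats 1600000


open MeasureTheory Filter Topology Set

noncomputable section AuxProof
open Metric
variable {n : ℕ}

def projL (i : Fin n) : EucV n →L[ℝ] ℝ := ContinuousLinearMap.proj i

def sqfn (z : EucV n) : EucV n → ℝ := fun y => ∑ i, (y i - z i)^2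

lemma contDiff_sqfn (z : EucV n) : ContDiff ℝ 2 (sqfn z) := by
  unfold sqfn
  exact ContDiff.sum fun i _ => ((projL i).contDiff.sub contDiff_const).pow 2

lemma sqfn_nonneg (z y : EucV n) : 0 ≤ sqfn z y :=
  Finset.sum_nonneg fun i _ => sq_nonneg _

lemma sqfn_self (z : EucV n) : sqfn z z = 0 := by simp [sqfn]

lemma sqfn_pos (z y : EucV n) (h : y ≠ z) : 0 < sqfn z y := by
  have : ∃ i, y i ≠ z i := by
    by_contra hc
    push_neg at hc
    exact h (funext hc)
  obtain ⟨i, hi⟩ := this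
  exact Finset.sum_pos' (fun j _ => sq_nonneg _)
    ⟨i, Finset.mem_univ i, by
      have : y i - z i ≠ 0 := sub_ne_zero.mpr hi
      positivity⟩

lemma hasFDerivAt_proj_sub (z y : EucV n) (i : Fin n) :
    HasFDerivAt (fun w : EucV n => (w i - z i)^2) ((2 * (y i - z i)) • projL i) y := by
  have h1 : HasFDerivAt (fun w : EucV n => w i - z i) (projL i) y :=
    (projL i).hasFDerivAt.sub_const (z i)
  have h2 : HasDerivAt (fun t : ℝ => t ^ 2) (2 * (y i - z i)) (y i - z i) := by
    simpa using hasDerivAt_pow 2 (y i - z i)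
  exact h2.comp_hasFDerivAt y h1

lemma hasFDerivAt_sqfn (z y : EucV n) :
    HasFDerivAt (sqfn z) (∑ i, (2 * (y i - z i)) • projL i) y :=
  HasFDerivAt.fun_sum (fun i _ => hasFDerivAt_proj_sub z y i)

lemma fderiv_sqfn_apply (z y v : EucV n) :
    fderiv ℝ (sqfn z) y v = ∑ i, 2 * (y i - z i) * v i := by
  rw [(hasFDerivAt_sqfn z y).fderiv]
  simp [projL, mul_comm]

lemma gradV_sqfn (z y : EucV n) : gradV (sqfn z) y = fun i => 2 * (y i - z i) := by
  funext j
  rw [gradV, fderiv_sqfn_apply]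
  rw [Finset.sum_eq_single j]
  · simp
  · intro i _ hij
    simp [Pi.single_apply, Ne.symm hij]
  · simp

lemma contDiff_fderiv_apply {ϕ : EucV n → ℝ} (hϕ : ContDiff ℝ 2 ϕ) (v : EucV n) :
    ContDiff ℝ 1 (fun y => fderiv ℝ ϕ y v) :=
  (hϕ.fderiv_right (m := 1) (by norm_num)).clm_apply contDiff_const

lemma hasFDerivAt_const_mul_sqfn (ε : ℝ) (z y : EucV n) :
    HasFDerivAt (fun w => ε * sqfn z w) (ε • ∑ i, (2 * (y i - z i)) • projL i) y :=
  (hasFDerivAt_sqfn z y).const_mul ε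

lemma gradV_add_smul_sqfn {ϕ : EucV n → ℝ} (hϕ : ContDiff ℝ 2 ϕ) (ε : ℝ) (z y : EucV n) :
    gradV (fun w => ϕ w + ε * sqfn z w) y
      = fun i => gradV ϕ y i + ε * (2 * (y i - z i)) := by
  funext j
  have hϕd : DifferentiableAt ℝ ϕ y := (hϕ.differentiable (by norm_num)).differentiableAt
  have h2 := hasFDerivAt_const_mul_sqfn ε z y
  rw [gradV, fderiv_fun_add hϕd h2.differentiableAt, ContinuousLinearMap.add_apply, h2.fderiv]
  simp only [ContinuousLinearMap.smul_apply, ContinuousLinearMap.sum_apply,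
    ContinuousLinearMap.smul_apply, projL, ContinuousLinearMap.proj_apply]
  rw [Finset.sum_eq_single j]
  · simp [gradV]
  · intro i _ hij; simp [Pi.single_apply, Ne.symm hij]
  · simp

lemma fderiv_inner_add_smul_sqfn {ϕ : EucV n → ℝ} (hϕ : ContDiff ℝ 2 ϕ) (ε : ℝ)
    (z : EucV n) (j : Fin n) :
    (fun w => fderiv ℝ (fun y => ϕ y + ε * sqfn z y) w (Pi.single j 1))
      = fun w => fderiv ℝ ϕ w (Pi.single j 1) + ε * (2 * (w j - z j)) := by
  funext w
  have := gradV_add_smul_sqfn hϕ ε z w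
  have h := congrFun this j
  simpa [gradV] using h

lemma hessM_add_smul_sqfn {ϕ : EucV n → ℝ} (hϕ : ContDiff ℝ 2 ϕ) (ε : ℝ) (z y : EucV n) :
    hessM (fun w => ϕ w + ε * sqfn z w) y
      = Matrix.of fun i j => hessM ϕ y i j + (if i = j then 2 * ε else 0) := by
  funext i j
  show fderiv ℝ (fun w => fderiv ℝ (fun y => ϕ y + ε * sqfn z y) w (Pi.single j 1)) y
      (Pi.single i 1) = _
  rw [fderiv_inner_add_smul_sqfn hϕ ε z j]
  have hd1 : DifferentiableAt ℝ (fun w => fderiv ℝ ϕ w (Pi.single j 1)) y :=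
    ((contDiff_fderiv_apply hϕ _).differentiable one_ne_zero).differentiableAt
  have h2 : HasFDerivAt (fun w : EucV n => ε * (2 * (w j - z j))) ((ε * 2) • projL j) y := by
    have hb : HasFDerivAt (fun w : EucV n => (ε * 2) * (w j - z j)) ((ε * 2) • projL j) y :=
      ((projL j).hasFDerivAt.sub_const (z j)).const_mul (ε * 2)
    have : (fun w : EucV n => ε * (2 * (w j - z j)))
        = fun w : EucV n => (ε * 2) * (w j - z j) := by funext w; ring
    rw [this]; exact hb
  rw [fderiv_fun_add hd1 h2.differentiableAt, ContinuousLinearMap.add_apply, h2.fderiv]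
  simp only [ContinuousLinearMap.smul_apply, projL, ContinuousLinearMap.proj_apply]
  have : hessM ϕ y i j = fderiv ℝ (fun w => fderiv ℝ ϕ w (Pi.single j 1)) y (Pi.single i 1) := rfl
  rw [Matrix.of_apply, ← this]
  congr 1
  by_cases hij : i = j
  · subst hij; simp; ring
  · simp [Pi.single_apply, Ne.symm hij, hij]

lemma continuous_gradV {ϕ : EucV n → ℝ} (hϕ : ContDiff ℝ 2 ϕ) : Continuous (gradV ϕ) :=
  continuous_pi fun i => (contDiff_fderiv_apply hϕ _).continuous

lemma continuous_hessM {ϕ : EucV n → ℝ} (hϕ : ContDiff ℝ 2 ϕ) : Continuous (hessM ϕ) := by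
  apply continuous_pi; intro i
  apply continuous_pi; intro j
  have hg : ContDiff ℝ 1 (fun w => fderiv ℝ ϕ w (Pi.single j 1)) := contDiff_fderiv_apply hϕ _
  have hc : Continuous (fderiv ℝ (fun w => fderiv ℝ ϕ w (Pi.single j 1))) :=
    hg.continuous_fderiv one_ne_zero
  exact (ContinuousLinearMap.apply ℝ ℝ (Pi.single i 1)).continuous.comp hc

lemma gradV_zero (y : EucV n) : gradV (fun _ => (0:ℝ)) y = fun _ => 0 := by
  funext i; simp [gradV]

lemma hessM_zero (y : EucV n) : hessM (fun _ => (0:ℝ)) y = fun _ _ => 0 := by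
  funext i j
  show fderiv ℝ (fun w => fderiv ℝ (fun _ => (0:ℝ)) w (Pi.single j 1)) y (Pi.single i 1) = 0
  simp

lemma gradV_sub_const (ϕ : EucV n → ℝ) (C : ℝ) (y : EucV n) :
    gradV (fun w => ϕ w - C) y = gradV ϕ y := by
  funext i; simp [gradV, fderiv_sub_const]

lemma hessM_sub_const (ϕ : EucV n → ℝ) (C : ℝ) (y : EucV n) :
    hessM (fun w => ϕ w - C) y = hessM ϕ y := by
  funext i j
  show fderiv ℝ (fun w => fderiv ℝ (fun v => ϕ v - C) w (Pi.single j 1)) y (Pi.single i 1) = _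
  simp only [fderiv_sub_const]
  rfl

lemma gradV_add_const (ϕ : EucV n → ℝ) (C : ℝ) (y : EucV n) :
    gradV (fun w => ϕ w + C) y = gradV ϕ y := by
  funext i; simp [gradV, fderiv_add_const]

lemma hessM_add_const (ϕ : EucV n → ℝ) (C : ℝ) (y : EucV n) :
    hessM (fun w => ϕ w + C) y = hessM ϕ y := by
  funext i j
  show fderiv ℝ (fun w => fderiv ℝ (fun v => ϕ v + C) w (Pi.single j 1)) y (Pi.single i 1) = _
  simp only [fderiv_add_const]
  rfl



lemma gradV_add_smul_sqfn_self {ϕ : EucV n → ℝ} (hϕ : ContDiff ℝ 2 ϕ) (ε : ℝ) (z : EucV n) :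
    gradV (fun w => ϕ w + ε * sqfn z w) z = gradV ϕ z := by
  rw [gradV_add_smul_sqfn hϕ ε z z]; funext i; simp

lemma stab_sub {n : ℕ} (Ω : Set (EucV n)) (F : Op n) (hΩo : IsOpen Ω)
    (hF2 : CondF2 Ω F)
    (μ : ℕ → ℝ) (hμpos : ∀ k, 0 < μ k) (hμ0 : Tendsto μ atTop (𝓝 0))
    (w : ℕ → EucV n → ℝ) (hwc : ∀ k, ContinuousOn (w k) (closure Ω))
    (hsub : ∀ k, SubsolOn (closure Ω) Ω (μ k) F (fun _ => 0) (w k))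
    (t : ℕ → ℝ) (c : ℝ) (hts : Tendsto (fun k => μ k * t k) atTop (𝓝 (-c)))
    (u : EucV n → ℝ) (huc : ContinuousOn u (closure Ω))
    (hunif : ∀ ε : ℝ, 0 < ε → ∀ᶠ k in atTop, ∀ x ∈ closure Ω, |w k x - t k - u x| < ε) :
    SubsolOn (closure Ω) Ω 0 F (fun _ => c) u := by
  intro ϕ hϕ x hxΩ hmax
  have hxK : x ∈ closure Ω := subset_closure hxΩ
  show 0 * u x + F x (gradV ϕ x) (hessM ϕ x) ≤ c
  rw [zero_mul, zero_add]
  suffices hE : ∀ ε : ℝ, 0 < ε →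
      F x (gradV ϕ x)
        (Matrix.of fun i j => hessM ϕ x i j + (if i = j then 2 * ε else 0)) ≤ c by
    have hM0 : (Matrix.of fun i j => hessM ϕ x i j + (if i = j then 2 * (0:ℝ) else 0))
        = hessM ϕ x := by funext i j; simp [Matrix.of_apply]
    have hcontM : Continuous (fun ε : ℝ =>
        (Matrix.of fun i j => hessM ϕ x i j + (if i = j then 2 * ε else 0) :
          Matrix (Fin n) (Fin n) ℝ)) := by
      apply continuous_pi; intro i; apply continuous_pi; intro j
      by_cases h : i = j <;> simp [Matrix.of_apply, h] <;> continuity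
    have hmap : Tendsto (fun ε : ℝ =>
        ((x, gradV ϕ x, Matrix.of fun i j => hessM ϕ x i j + (if i = j then 2 * ε else 0)) :
          EucV n × EucV n × Matrix (Fin n) (Fin n) ℝ))
        (𝓝[>] (0:ℝ)) (𝓝[(closure Ω) ×ˢ univ] (x, gradV ϕ x, hessM ϕ x)) := by
      rw [tendsto_nhdsWithin_iff]
      constructor
      · have h0 : Tendsto (fun ε : ℝ =>
            ((x, gradV ϕ x, Matrix.of fun i j => hessM ϕ x i j + (if i = j then 2 * ε else 0)) :
              EucV n × EucV n × Matrix (Fin n) (Fin n) ℝ)) (𝓝 0)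
            (𝓝 (x, gradV ϕ x,
              Matrix.of fun i j => hessM ϕ x i j + (if i = j then 2 * (0:ℝ) else 0))) :=
          ((continuous_const.prodMk (continuous_const.prodMk hcontM)).tendsto 0)
        rw [hM0] at h0
        exact h0.mono_left nhdsWithin_le_nhds
      · exact Filter.Eventually.of_forall (fun ε => ⟨hxK, trivial⟩)
    have hFt := (hF2 _ (⟨hxK, trivial⟩ :
      (x, gradV ϕ x, hessM ϕ x) ∈ (closure Ω) ×ˢ univ)).tendsto.comp hmap
    exact le_of_tendsto hFt (eventually_nhdsWithin_of_forall (fun ε hε => hE ε hε))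
  intro ε hε
  obtain ⟨r₁, hr₁, hball₁⟩ := mem_nhdsWithin_iff.mp hmax
  obtain ⟨r₂, hr₂, hball₂⟩ := Metric.isOpen_iff.mp hΩo x hxΩ
  set r : ℝ := min r₁ r₂ / 2 with hrdef
  have hrpos : 0 < r := by positivity
  have hcb_sub : closedBall x r ⊆ ball x (min r₁ r₂) :=
    closedBall_subset_ball (by rw [hrdef]; exact half_lt_self (lt_min hr₁ hr₂))
  have hcbΩ : closedBall x r ⊆ Ω :=
    hcb_sub.trans ((ball_subset_ball (min_le_right _ _)).trans hball₂)
  have hcbK : closedBall x r ⊆ closure Ω := hcbΩ.trans subset_closure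
  have hcb1 : closedBall x r ⊆ ball x r₁ := hcb_sub.trans (ball_subset_ball (min_le_left _ _))
  have hΦ : ContDiff ℝ 2 (fun y => ϕ y + ε * sqfn x y) :=
    hϕ.add (contDiff_const.mul (contDiff_sqfn x))
  set Φ : EucV n → ℝ := fun y => ϕ y + ε * sqfn x y with hΦdef
  clear_value Φ
  have hΦy : ∀ y, Φ y = ϕ y + ε * sqfn x y := fun y => by rw [hΦdef]
  have hΦx : Φ x = ϕ x := by rw [hΦy x]; simp [sqfn_self]
  have hstrict : ∀ y ∈ closedBall x r, y ≠ x → u y - Φ y < u x - Φ x := by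
    intro y hy hne
    have h1 : u y - ϕ y ≤ u x - ϕ x := hball₁ ⟨hcb1 hy, hcbK hy⟩
    have h2 : 0 < ε * sqfn x y := mul_pos hε (sqfn_pos x y hne)
    rw [hΦx, hΦy y]; linarith
  have hcb : IsCompact (closedBall x r) := isCompact_closedBall x r
  have hcbne : (closedBall x r).Nonempty := ⟨x, mem_closedBall_self hrpos.le⟩
  have hxcb : x ∈ closedBall x r := mem_closedBall_self hrpos.le
  have hmaxsel : ∀ k, ∃ y ∈ closedBall x r, IsMaxOn (fun z => w k z - Φ z) (closedBall x r) y :=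
    fun k => hcb.exists_isMaxOn hcbne (((hwc k).mono hcbK).sub hΦ.continuous.continuousOn)
  choose xk hxkmem hxkmax using hmaxsel
  -- convergence of max points
  have hconv : Tendsto xk atTop (𝓝 x) := by
    rw [Metric.tendsto_atTop]
    intro η hη
    by_cases hcase : (closedBall x r \ ball x η).Nonempty
    · obtain ⟨y₀, hy₀mem, hy₀max⟩ := (hcb.diff isOpen_ball).exists_isMaxOn hcase
        ((huc.mono ((diff_subset).trans hcbK)).sub hΦ.continuous.continuousOn)
      have hy₀x : y₀ ≠ x := by
        intro h
        exact hy₀mem.2 (h ▸ mem_ball_self hη)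
      have hmM : u y₀ - Φ y₀ < u x - Φ x := hstrict y₀ hy₀mem.1 hy₀x
      have hσ : 0 < (u x - Φ x - (u y₀ - Φ y₀)) / 3 := by linarith
      obtain ⟨N, hN⟩ := eventually_atTop.mp (hunif _ hσ)
      refine ⟨N, fun k hk => ?_⟩
      by_contra hcon
      push_neg at hcon
      have hxkdiff : xk k ∈ closedBall x r \ ball x η :=
        ⟨hxkmem k, by simp [mem_ball]; exact hcon⟩
      have h1 : w k x - Φ x ≤ w k (xk k) - Φ (xk k) := hxkmax k hxcb
      have h2 := abs_lt.mp (hN k hk (xk k) (hcbK (hxkmem k)))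
      have h3 := abs_lt.mp (hN k hk x hxK)
      have h4 : u (xk k) - Φ (xk k) ≤ u y₀ - Φ y₀ := hy₀max hxkdiff
      linarith
    · refine ⟨0, fun k _ => ?_⟩
      rw [not_nonempty_iff_eq_empty] at hcase
      have : xk k ∈ ball x η := by
        by_contra hcon
        exact absurd (Set.mem_diff_of_mem (hxkmem k) hcon) (by rw [hcase]; exact notMem_empty _)
      simpa [mem_ball] using this
  have hxkK : ∀ k, xk k ∈ closure Ω := fun k => hcbK (hxkmem k)
  have hx_in : Tendsto xk atTop (𝓝[closure Ω] x) :=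
    tendsto_nhdsWithin_iff.mpr ⟨hconv, Filter.Eventually.of_forall hxkK⟩
  -- eventual viscosity inequality
  have h_ineq : ∀ᶠ k in atTop,
      μ k * w k (xk k) + F (xk k) (gradV Φ (xk k)) (hessM Φ (xk k)) ≤ 0 := by
    obtain ⟨N, hN⟩ := Metric.tendsto_atTop.mp hconv r hrpos
    rw [eventually_atTop]
    refine ⟨N, fun k hk => ?_⟩
    have hball : xk k ∈ ball x r := by simpa [mem_ball] using hN k hk
    have hloc : IsLocalMaxOn (fun y => w k y - Φ y) (closure Ω) (xk k) := by
      have hmem : ball x r ∈ 𝓝[closure Ω] (xk k) :=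
        mem_nhdsWithin_of_mem_nhds (isOpen_ball.mem_nhds hball)
      exact Filter.mem_of_superset hmem (fun y hy => hxkmax k (ball_subset_closedBall hy))
    have := hsub k Φ hΦ (xk k) (hcbΩ (hxkmem k)) hloc
    simpa using this
  -- limits
  have h_uxk : Tendsto (fun k => u (xk k)) atTop (𝓝 (u x)) :=
    Tendsto.comp (huc x hxK) hx_in
  have hd : Tendsto (fun k => dist (w k (xk k) - t k) (u (xk k))) atTop (𝓝 0) := by
    rw [Metric.tendsto_atTop]
    intro ε' hε'
    obtain ⟨N, hN⟩ := eventually_atTop.mp (hunif ε' hε')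
    refine ⟨N, fun k hk => ?_⟩
    have := hN k hk (xk k) (hxkK k)
    rw [Real.dist_eq, Real.dist_eq]
    simpa [abs_of_nonneg (abs_nonneg _)] using this
  have h_wk : Tendsto (fun k => w k (xk k) - t k) atTop (𝓝 (u x)) :=
    h_uxk.congr_dist (by simpa [dist_comm] using hd)
  have h1 : Tendsto (fun k => μ k * w k (xk k)) atTop (𝓝 (-c)) := by
    have h2 : Tendsto (fun k => μ k * (w k (xk k) - t k) + μ k * t k) atTop
        (𝓝 (0 * u x + -c)) := (hμ0.mul h_wk).add hts
    rw [zero_mul, zero_add] at h2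
    exact h2.congr (fun k => by ring)
  have hFt : Tendsto (fun k => F (xk k) (gradV Φ (xk k)) (hessM Φ (xk k))) atTop
      (𝓝 (F x (gradV Φ x) (hessM Φ x))) := by
    have hG : Continuous (fun y : EucV n => ((y, gradV Φ y, hessM Φ y) :
        EucV n × EucV n × Matrix (Fin n) (Fin n) ℝ)) :=
      continuous_id.prodMk ((continuous_gradV hΦ).prodMk (continuous_hessM hΦ))
    have htrip : Tendsto (fun k => ((xk k, gradV Φ (xk k), hessM Φ (xk k)) :
        EucV n × EucV n × Matrix (Fin n) (Fin n) ℝ)) atTop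
        (𝓝[(closure Ω) ×ˢ univ] (x, gradV Φ x, hessM Φ x)) :=
      tendsto_nhdsWithin_iff.mpr ⟨(hG.tendsto x).comp hconv,
        Filter.Eventually.of_forall (fun k => ⟨hxkK k, trivial⟩)⟩
    exact Tendsto.comp (hF2 _ (⟨hxK, trivial⟩ :
      (x, gradV Φ x, hessM Φ x) ∈ (closure Ω) ×ˢ univ)) htrip
  have hlim := le_of_tendsto (h1.add hFt) h_ineq
  have hg : gradV Φ x = gradV ϕ x := by
    rw [hΦdef]; exact gradV_add_smul_sqfn_self hϕ ε x
  have hh : hessM Φ x = Matrix.of fun i j => hessM ϕ x i j + (if i = j then 2 * ε else 0) := by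
    rw [hΦdef]; exact hessM_add_smul_sqfn hϕ ε x x
  rw [hg, hh] at hlim
  linarith

lemma stab_sup {n : ℕ} (Ω : Set (EucV n)) (F : Op n)
    (hF2 : CondF2 Ω F)
    (μ : ℕ → ℝ) (hμ0 : Tendsto μ atTop (𝓝 0))
    (w : ℕ → EucV n → ℝ) (hwc : ∀ k, ContinuousOn (w k) (closure Ω))
    (hsup : ∀ k, SupersolOn (closure Ω) (closure Ω) (μ k) F (fun _ => 0) (w k))
    (t : ℕ → ℝ) (c : ℝ) (hts : Tendsto (fun k => μ k * t k) atTop (𝓝 (-c)))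
    (u : EucV n → ℝ) (huc : ContinuousOn u (closure Ω))
    (hunif : ∀ ε : ℝ, 0 < ε → ∀ᶠ k in atTop, ∀ x ∈ closure Ω, |w k x - t k - u x| < ε) :
    SupersolOn (closure Ω) (closure Ω) 0 F (fun _ => c) u := by
  intro ϕ hϕ x hxK hmin
  show c ≤ 0 * u x + F x (gradV ϕ x) (hessM ϕ x)
  rw [zero_mul, zero_add]
  suffices hE : ∀ ε : ℝ, 0 < ε →
      c ≤ F x (gradV ϕ x)
        (Matrix.of fun i j => hessM ϕ x i j + (if i = j then 2 * (-ε) else 0)) by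
    have hM0 : (Matrix.of fun i j => hessM ϕ x i j + (if i = j then 2 * (-(0:ℝ)) else 0))
        = hessM ϕ x := by funext i j; simp [Matrix.of_apply]
    have hcontM : Continuous (fun ε : ℝ =>
        (Matrix.of fun i j => hessM ϕ x i j + (if i = j then 2 * (-ε) else 0) :
          Matrix (Fin n) (Fin n) ℝ)) := by
      apply continuous_pi; intro i; apply continuous_pi; intro j
      by_cases h : i = j <;> simp [Matrix.of_apply, h] <;> continuity
    have hmap : Tendsto (fun ε : ℝ =>
        ((x, gradV ϕ x, Matrix.of fun i j => hessM ϕ x i j + (if i = j then 2 * (-ε) else 0)) :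
          EucV n × EucV n × Matrix (Fin n) (Fin n) ℝ))
        (𝓝[>] (0:ℝ)) (𝓝[(closure Ω) ×ˢ univ] (x, gradV ϕ x, hessM ϕ x)) := by
      rw [tendsto_nhdsWithin_iff]
      constructor
      · have h0 : Tendsto (fun ε : ℝ =>
            ((x, gradV ϕ x,
              Matrix.of fun i j => hessM ϕ x i j + (if i = j then 2 * (-ε) else 0)) :
              EucV n × EucV n × Matrix (Fin n) (Fin n) ℝ)) (𝓝 0)
            (𝓝 (x, gradV ϕ x,
              Matrix.of fun i j => hessM ϕ x i j + (if i = j then 2 * (-(0:ℝ)) else 0))) :=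
          ((continuous_const.prodMk (continuous_const.prodMk hcontM)).tendsto 0)
        rw [hM0] at h0
        exact h0.mono_left nhdsWithin_le_nhds
      · exact Filter.Eventually.of_forall (fun ε => ⟨hxK, trivial⟩)
    have hFt := (hF2 _ (⟨hxK, trivial⟩ :
      (x, gradV ϕ x, hessM ϕ x) ∈ (closure Ω) ×ˢ univ)).tendsto.comp hmap
    exact ge_of_tendsto hFt (eventually_nhdsWithin_of_forall (fun ε hε => hE ε hε))
  intro ε hε
  obtain ⟨r₁, hr₁, hball₁⟩ := mem_nhdsWithin_iff.mp hmin
  set r : ℝ := r₁ / 2 with hrdef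
  have hrpos : 0 < r := by positivity
  have hcb1 : closedBall x r ⊆ ball x r₁ := by
    rw [hrdef]; exact closedBall_subset_ball (half_lt_self hr₁)
  have hΦ : ContDiff ℝ 2 (fun y => ϕ y + (-ε) * sqfn x y) :=
    hϕ.add (contDiff_const.mul (contDiff_sqfn x))
  set Φ : EucV n → ℝ := fun y => ϕ y + (-ε) * sqfn x y with hΦdef
  clear_value Φ
  have hΦy : ∀ y, Φ y = ϕ y + (-ε) * sqfn x y := fun y => by rw [hΦdef]
  have hΦx : Φ x = ϕ x := by rw [hΦy x]; simp [sqfn_self]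
  set D : Set (EucV n) := closure Ω ∩ closedBall x r with hDdef
  have hDK : D ⊆ closure Ω := inter_subset_left
  have hDcb : D ⊆ closedBall x r := inter_subset_right
  have hxD : x ∈ D := ⟨hxK, mem_closedBall_self hrpos.le⟩
  have hstrict : ∀ y ∈ D, y ≠ x → u x - Φ x < u y - Φ y := by
    intro y hy hne
    have h1 : u x - ϕ x ≤ u y - ϕ y := hball₁ ⟨hcb1 (hDcb hy), hDK hy⟩
    have h2 : 0 < ε * sqfn x y := mul_pos hε (sqfn_pos x y hne)
    rw [hΦx, hΦy y]; linarith
  have hD : IsCompact D := (isCompact_closedBall x r).inter_left isClosed_closure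
  have hDne : D.Nonempty := ⟨x, hxD⟩
  have hminsel : ∀ k, ∃ y ∈ D, IsMinOn (fun z => w k z - Φ z) D y :=
    fun k => hD.exists_isMinOn hDne (((hwc k).mono hDK).sub hΦ.continuous.continuousOn)
  choose xk hxkmem hxkmin using hminsel
  have hxkK : ∀ k, xk k ∈ closure Ω := fun k => hDK (hxkmem k)
  have hconv : Tendsto xk atTop (𝓝 x) := by
    rw [Metric.tendsto_atTop]
    intro η hη
    by_cases hcase : (D \ ball x η).Nonempty
    · obtain ⟨y₀, hy₀mem, hy₀min⟩ := (hD.diff isOpen_ball).exists_isMinOn hcase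
        ((huc.mono ((diff_subset).trans hDK)).sub hΦ.continuous.continuousOn)
      have hy₀x : y₀ ≠ x := by
        intro h
        exact hy₀mem.2 (h ▸ mem_ball_self hη)
      have hmM : u x - Φ x < u y₀ - Φ y₀ := hstrict y₀ hy₀mem.1 hy₀x
      have hσ : 0 < (u y₀ - Φ y₀ - (u x - Φ x)) / 3 := by linarith
      obtain ⟨N, hN⟩ := eventually_atTop.mp (hunif _ hσ)
      refine ⟨N, fun k hk => ?_⟩
      by_contra hcon
      push_neg at hcon
      have hxkdiff : xk k ∈ D \ ball x η :=
        ⟨hxkmem k, by simp [mem_ball]; exact hcon⟩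
      have h1 : w k (xk k) - Φ (xk k) ≤ w k x - Φ x := hxkmin k hxD
      have h2 := abs_lt.mp (hN k hk (xk k) (hxkK k))
      have h3 := abs_lt.mp (hN k hk x hxK)
      have h4 : u y₀ - Φ y₀ ≤ u (xk k) - Φ (xk k) := hy₀min hxkdiff
      linarith
    · refine ⟨0, fun k _ => ?_⟩
      rw [not_nonempty_iff_eq_empty] at hcase
      have : xk k ∈ ball x η := by
        by_contra hcon
        exact absurd (Set.mem_diff_of_mem (hxkmem k) hcon) (by rw [hcase]; exact notMem_empty _)
      simpa [mem_ball] using this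
  have hx_in : Tendsto xk atTop (𝓝[closure Ω] x) :=
    tendsto_nhdsWithin_iff.mpr ⟨hconv, Filter.Eventually.of_forall hxkK⟩
  have h_ineq : ∀ᶠ k in atTop,
      0 ≤ μ k * w k (xk k) + F (xk k) (gradV Φ (xk k)) (hessM Φ (xk k)) := by
    obtain ⟨N, hN⟩ := Metric.tendsto_atTop.mp hconv r hrpos
    rw [eventually_atTop]
    refine ⟨N, fun k hk => ?_⟩
    have hball : xk k ∈ ball x r := by simpa [mem_ball] using hN k hk
    have hloc : IsLocalMinOn (fun y => w k y - Φ y) (closure Ω) (xk k) := by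
      have hmem : ball x r ∩ closure Ω ∈ 𝓝[closure Ω] (xk k) :=
        Filter.inter_mem (mem_nhdsWithin_of_mem_nhds (isOpen_ball.mem_nhds hball))
          self_mem_nhdsWithin
      exact Filter.mem_of_superset hmem
        (fun y hy => hxkmin k ⟨hy.2, ball_subset_closedBall hy.1⟩)
    have := hsup k Φ hΦ (xk k) (hxkK k) hloc
    simpa using this
  have h_uxk : Tendsto (fun k => u (xk k)) atTop (𝓝 (u x)) :=
    Tendsto.comp (huc x hxK) hx_in
  have hd : Tendsto (fun k => dist (w k (xk k) - t k) (u (xk k))) atTop (𝓝 0) := by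
    rw [Metric.tendsto_atTop]
    intro ε' hε'
    obtain ⟨N, hN⟩ := eventually_atTop.mp (hunif ε' hε')
    refine ⟨N, fun k hk => ?_⟩
    have := hN k hk (xk k) (hxkK k)
    rw [Real.dist_eq, Real.dist_eq]
    simpa [abs_of_nonneg (abs_nonneg _)] using this
  have h_wk : Tendsto (fun k => w k (xk k) - t k) atTop (𝓝 (u x)) :=
    h_uxk.congr_dist (by simpa [dist_comm] using hd)
  have h1 : Tendsto (fun k => μ k * w k (xk k)) atTop (𝓝 (-c)) := by
    have h2 : Tendsto (fun k => μ k * (w k (xk k) - t k) + μ k * t k) atTop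
        (𝓝 (0 * u x + -c)) := (hμ0.mul h_wk).add hts
    rw [zero_mul, zero_add] at h2
    exact h2.congr (fun k => by ring)
  have hFt : Tendsto (fun k => F (xk k) (gradV Φ (xk k)) (hessM Φ (xk k))) atTop
      (𝓝 (F x (gradV Φ x) (hessM Φ x))) := by
    have hG : Continuous (fun y : EucV n => ((y, gradV Φ y, hessM Φ y) :
        EucV n × EucV n × Matrix (Fin n) (Fin n) ℝ)) :=
      continuous_id.prodMk ((continuous_gradV hΦ).prodMk (continuous_hessM hΦ))
    have htrip : Tendsto (fun k => ((xk k, gradV Φ (xk k), hessM Φ (xk k)) :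
        EucV n × EucV n × Matrix (Fin n) (Fin n) ℝ)) atTop
        (𝓝[(closure Ω) ×ˢ univ] (x, gradV Φ x, hessM Φ x)) :=
      tendsto_nhdsWithin_iff.mpr ⟨(hG.tendsto x).comp hconv,
        Filter.Eventually.of_forall (fun k => ⟨hxkK k, trivial⟩)⟩
    exact Tendsto.comp (hF2 _ (⟨hxK, trivial⟩ :
      (x, gradV Φ x, hessM Φ x) ∈ (closure Ω) ×ˢ univ)) htrip
  have hlim := ge_of_tendsto (h1.add hFt) h_ineq
  have hg : gradV Φ x = gradV ϕ x := by
    rw [hΦdef]; exact gradV_add_smul_sqfn_self hϕ (-ε) x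
  have hh : hessM Φ x = Matrix.of fun i j => hessM ϕ x i j + (if i = j then 2 * (-ε) else 0) := by
    rw [hΦdef]; exact hessM_add_smul_sqfn hϕ (-ε) x x
  rw [hg, hh] at hlim
  linarith

lemma crit_le {n : ℕ} (Ω : Set (EucV n)) (F : Op n)
    (hK : IsCompact (closure Ω)) (hKne : (closure Ω).Nonempty) (hCPS : CondCPS Ω F)
    (c d : ℝ) (u v : EucV n → ℝ)
    (huc : ContinuousOn u (closure Ω)) (hvc : ContinuousOn v (closure Ω))
    (hu : SupersolOn (closure Ω) (closure Ω) 0 F (fun _ => c) u)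
    (hv : SubsolOn (closure Ω) Ω 0 F (fun _ => d) v) : c ≤ d := by
  obtain ⟨Mu, hMu⟩ := hK.exists_bound_of_continuousOn huc
  obtain ⟨Mv, hMv⟩ := hK.exists_bound_of_continuousOn hvc
  obtain ⟨x₀, hx₀⟩ := hKne
  have hMu' : ∀ x ∈ closure Ω, |u x| ≤ Mu := fun x hx => by
    simpa [Real.norm_eq_abs] using hMu x hx
  have hMv' : ∀ x ∈ closure Ω, |v x| ≤ Mv := fun x hx => by
    simpa [Real.norm_eq_abs] using hMv x hx
  have key : ∀ lam : ℝ, 0 < lam → c - d ≤ lam * (2 * Mu + 2 * Mv) := by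
    intro lam hlam
    have hlamne : lam ≠ 0 := ne_of_gt hlam
    -- supersolution W
    have hW : SupersolOn (closure Ω) (closure Ω) lam F (fun _ => 0)
        (fun y => u y + (Mu + (-c) / lam)) := by
      intro ϕ hϕ x hx hminW
      have hmin' : IsLocalMinOn (fun y => u y - (ϕ y - (Mu + (-c) / lam))) (closure Ω) x := by
        have heq : (fun y => u y - (ϕ y - (Mu + (-c) / lam)))
            = fun y => (u y + (Mu + (-c) / lam)) - ϕ y := by funext y; ring
        rw [heq]; exact hminW
      have h := hu (fun y => ϕ y - (Mu + (-c) / lam)) (hϕ.sub contDiff_const) x hx hmin'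
      rw [gradV_sub_const, hessM_sub_const] at h
      have hFc : c ≤ F x (gradV ϕ x) (hessM ϕ x) := by
        simpa using h
      show (0:ℝ) ≤ lam * (u x + (Mu + (-c) / lam)) + F x (gradV ϕ x) (hessM ϕ x)
      have hcancel : lam * ((-c) / lam) = -c := by field_simp
      have hexp : lam * (u x + (Mu + (-c) / lam))
          = lam * u x + lam * Mu + lam * ((-c) / lam) := by ring
      have h0 : 0 ≤ u x + Mu := by
        have := (abs_le.mp (hMu' x hx)).1; linarith
      have h1 : 0 ≤ lam * (u x + Mu) := mul_nonneg hlam.le h0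
      have h2 : lam * (u x + Mu) = lam * u x + lam * Mu := by ring
      linarith
    -- subsolution V
    have hV : SubsolOn (closure Ω) Ω lam F (fun _ => 0)
        (fun y => v y + ((-Mv) + (-d) / lam)) := by
      intro ϕ hϕ x hx hmaxV
      have hmax' : IsLocalMaxOn (fun y => v y - (ϕ y - ((-Mv) + (-d) / lam))) (closure Ω) x := by
        have heq : (fun y => v y - (ϕ y - ((-Mv) + (-d) / lam)))
            = fun y => (v y + ((-Mv) + (-d) / lam)) - ϕ y := by funext y; ring
        rw [heq]; exact hmaxV
      have h := hv (fun y => ϕ y - ((-Mv) + (-d) / lam)) (hϕ.sub contDiff_const) x hx hmax'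
      rw [gradV_sub_const, hessM_sub_const] at h
      have hFd : F x (gradV ϕ x) (hessM ϕ x) ≤ d := by
        simpa using h
      show lam * (v x + ((-Mv) + (-d) / lam)) + F x (gradV ϕ x) (hessM ϕ x) ≤ 0
      have hcancel : lam * ((-d) / lam) = -d := by field_simp
      have hexp : lam * (v x + ((-Mv) + (-d) / lam))
          = lam * v x + lam * (-Mv) + lam * ((-d) / lam) := by ring
      have h0 : v x + (-Mv) ≤ 0 := by
        have := (abs_le.mp (hMv' x (subset_closure hx))).2; linarith
      have h1 : lam * (v x + (-Mv)) ≤ 0 := mul_nonpos_of_nonneg_of_nonpos hlam.le h0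
      have h2 : lam * (v x + (-Mv)) = lam * v x + lam * (-Mv) := by ring
      linarith
    have hVW := hCPS lam hlam _ _ (hvc.add continuousOn_const) (huc.add continuousOn_const)
      hV hW x₀ hx₀
    -- hVW : v x₀ + (-Mv + (-d)/lam) ≤ u x₀ + (Mu + (-c)/lam)
    have hmul : lam * (v x₀ + ((-Mv) + (-d) / lam)) ≤ lam * (u x₀ + (Mu + (-c) / lam)) :=
      mul_le_mul_of_nonneg_left hVW hlam.le
    have hcancelc : lam * ((-c) / lam) = -c := by field_simp
    have hcanceld : lam * ((-d) / lam) = -d := by field_simp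
    have e1 : lam * (v x₀ + ((-Mv) + (-d) / lam))
        = lam * v x₀ + lam * (-Mv) + lam * ((-d) / lam) := by ring
    have e2 : lam * (u x₀ + (Mu + (-c) / lam))
        = lam * u x₀ + lam * Mu + lam * ((-c) / lam) := by ring
    have b1 : lam * u x₀ ≤ lam * Mu :=
      mul_le_mul_of_nonneg_left (abs_le.mp (hMu' x₀ hx₀)).2 hlam.le
    have b2 : lam * (-Mv) ≤ lam * v x₀ :=
      mul_le_mul_of_nonneg_left (neg_le_of_abs_le (hMv' x₀ hx₀)) hlam.le
    have hexpand : lam * (2 * Mu + 2 * Mv) = lam * Mu + lam * Mu + lam * Mv + lam * Mv := by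
      ring
    have hMvneg : lam * (-Mv) = -(lam * Mv) := by ring
    linarith
  have ht : Tendsto (fun lam : ℝ => lam * (2 * Mu + 2 * Mv)) (𝓝[>] 0) (𝓝 0) := by
    have h0 : Tendsto (fun lam : ℝ => lam * (2 * Mu + 2 * Mv)) (𝓝 0)
        (𝓝 (0 * (2 * Mu + 2 * Mv))) := (continuous_id.mul continuous_const).tendsto (0:ℝ)
    rw [zero_mul] at h0
    exact h0.mono_left nhdsWithin_le_nhds
  have := ge_of_tendsto ht (eventually_nhdsWithin_of_forall (fun lam hlam => key lam hlam))
  linarith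

lemma exists_solES {n : ℕ} (Ω : Set (EucV n)) (F : Op n) (hΩ : BoundedDomain Ω)
    (hF2 : CondF2 Ω F) (vfam : ℝ → EucV n → ℝ)
    (hSLS : CondSLS Ω F vfam) (hEC : CondEC Ω vfam) :
    ∃ (u : EucV n → ℝ) (c : ℝ), ContinuousOn u (closure Ω) ∧ SolES Ω F c u := by
  obtain ⟨hΩo, hΩconn, hΩbd⟩ := hΩ
  have hK : IsCompact (closure Ω) := hΩbd.isCompact_closure
  obtain ⟨x₀, hx₀Ω⟩ := hΩconn.nonempty
  have hx₀K : x₀ ∈ closure Ω := subset_closure hx₀Ω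
  have hKne : (closure Ω).Nonempty := ⟨x₀, hx₀K⟩
  haveI : PreconnectedSpace (closure Ω) :=
    Subtype.preconnectedSpace hΩconn.isPreconnected.closure
  obtain ⟨δ₁, hδ₁, hδbd⟩ := hEC 1 one_pos
  -- pointwise bound via connectedness
  have hptw : ∀ p : closure Ω, ∃ N : ℝ, ∀ lam : ℝ, 0 < lam →
      |vfam lam p.1 - vfam lam x₀| ≤ N := by
    set S : Set (closure Ω) :=
      {p | ∃ N : ℝ, ∀ lam : ℝ, 0 < lam → |vfam lam p.1 - vfam lam x₀| ≤ N} with hSdef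
    have hSopen : IsOpen S := by
      rw [Metric.isOpen_iff]
      rintro p ⟨N, hN⟩
      refine ⟨δ₁, hδ₁, fun q hq => ?_⟩
      refine ⟨N + 1, fun lam hlam => ?_⟩
      have hdist : dist q.1 p.1 < δ₁ := by
        rw [← Subtype.dist_eq]; exact hq
      have h1 : |vfam lam q.1 - vfam lam p.1| < 1 := hδbd lam hlam q.1 q.2 p.1 p.2 hdist
      have h2 := hN lam hlam
      calc |vfam lam q.1 - vfam lam x₀|
          ≤ |vfam lam q.1 - vfam lam p.1| + |vfam lam p.1 - vfam lam x₀| :=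
            abs_sub_le _ _ _
        _ ≤ N + 1 := by linarith
    have hScopen : IsOpen Sᶜ := by
      rw [Metric.isOpen_iff]
      intro p hp
      refine ⟨δ₁, hδ₁, fun q hq => ?_⟩
      intro hqS
      obtain ⟨N, hN⟩ := hqS
      apply hp
      refine ⟨N + 1, fun lam hlam => ?_⟩
      have hdist : dist p.1 q.1 < δ₁ := by
        rw [← Subtype.dist_eq]; rw [dist_comm]; exact hq
      have h1 : |vfam lam p.1 - vfam lam q.1| < 1 := hδbd lam hlam p.1 p.2 q.1 q.2 hdist
      have h2 := hN lam hlam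
      calc |vfam lam p.1 - vfam lam x₀|
          ≤ |vfam lam p.1 - vfam lam q.1| + |vfam lam q.1 - vfam lam x₀| :=
            abs_sub_le _ _ _
        _ ≤ N + 1 := by linarith
    have hSne : S.Nonempty := ⟨⟨x₀, hx₀K⟩, ⟨0, fun lam _ => by simp⟩⟩
    have hSuniv : S = univ :=
      (IsClopen.eq_univ ⟨isOpen_compl_iff.mp hScopen, hSopen⟩ hSne)
    intro p
    have : p ∈ S := by rw [hSuniv]; exact mem_univ p
    exact this
  choose Nf hNf using hptw
  -- uniform bound via compactness
  obtain ⟨B, hB0, hB⟩ : ∃ B : ℝ, 0 ≤ B ∧ ∀ lam : ℝ, 0 < lam →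
      ∀ x ∈ closure Ω, |vfam lam x - vfam lam x₀| ≤ B := by
    have hcover : closure Ω ⊆ ⋃ p : closure Ω, Metric.ball p.1 δ₁ :=
      fun x hx => mem_iUnion.mpr ⟨⟨x, hx⟩, mem_ball_self hδ₁⟩
    obtain ⟨T, hT⟩ := hK.elim_finite_subcover (fun p : closure Ω => Metric.ball p.1 δ₁)
      (fun _ => isOpen_ball) hcover
    have hTne : T.Nonempty := by
      obtain ⟨p, hpT, _⟩ := mem_iUnion₂.mp (hT hx₀K)
      exact ⟨p, hpT⟩
    refine ⟨max 0 (T.sup' hTne Nf) + 1, by positivity, fun lam hlam x hx => ?_⟩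
    obtain ⟨p, hpT, hpball⟩ := mem_iUnion₂.mp (hT hx)
    have h1 : |vfam lam x - vfam lam p.1| < 1 :=
      hδbd lam hlam x hx p.1 p.2 hpball
    have h2 : |vfam lam p.1 - vfam lam x₀| ≤ Nf p := hNf p lam hlam
    have h3 : Nf p ≤ T.sup' hTne Nf := Finset.le_sup' Nf hpT
    have h4 : T.sup' hTne Nf ≤ max 0 (T.sup' hTne Nf) := le_max_right _ _
    calc |vfam lam x - vfam lam x₀|
        ≤ |vfam lam x - vfam lam p.1| + |vfam lam p.1 - vfam lam x₀| := abs_sub_le _ _ _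
      _ ≤ max 0 (T.sup' hTne Nf) + 1 := by linarith
  -- bound C₀ on |F x 0 0|
  have hG0cont : ContinuousOn (fun x : EucV n =>
      F x (fun _ => (0:ℝ)) (fun _ _ => (0:ℝ))) (closure Ω) := by
    have hmaps : MapsTo (fun x : EucV n =>
        ((x, (fun _ => (0:ℝ)), (fun _ _ => (0:ℝ))) :
          EucV n × EucV n × Matrix (Fin n) (Fin n) ℝ)) (closure Ω) ((closure Ω) ×ˢ univ) :=
      fun x hx => ⟨hx, trivial⟩
    exact hF2.comp
      ((continuous_id.prodMk (continuous_const.prodMk continuous_const)).continuousOn) hmaps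
  obtain ⟨C₀, hC₀⟩ := hK.exists_bound_of_continuousOn hG0cont
  have hlow : ∀ lam : ℝ, 0 < lam → -C₀ ≤ lam * vfam lam x₀ := by
    intro lam hlam
    obtain ⟨xm, hxm, hxmmin⟩ := hK.exists_isMinOn hKne (hSLS lam hlam).1
    have hloc : IsLocalMinOn (fun y => vfam lam y - (fun _ => (0:ℝ)) y) (closure Ω) xm := by
      have heq : (fun y => vfam lam y - (fun _ => (0:ℝ)) y) = vfam lam := by funext y; simp
      rw [heq]; exact hxmmin.localize
    have h := (hSLS lam hlam).2.2 (fun _ => (0:ℝ)) contDiff_const xm hxm hloc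
    rw [gradV_zero, hessM_zero] at h
    have h2 : 0 ≤ lam * vfam lam xm + F xm (fun _ => (0:ℝ)) (fun _ _ => (0:ℝ)) := by
      simpa using h
    have hFb := (abs_le.mp (by simpa [Real.norm_eq_abs] using hC₀ xm hxm)).2
    have hmin0 : vfam lam xm ≤ vfam lam x₀ := hxmmin hx₀K
    have hmul := mul_le_mul_of_nonneg_left hmin0 hlam.le
    linarith
  -- upper bound via quadratic test function
  obtain ⟨r₀, hr₀, hballz⟩ := Metric.isOpen_iff.mp hΩo x₀ hx₀Ω
  set r : ℝ := r₀ / 2 with hrdef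
  have hrpos : 0 < r := by positivity
  have hball_sub : Metric.ball x₀ r ⊆ Ω :=
    (ball_subset_ball (by rw [hrdef]; exact (half_le_self hr₀.le))).trans hballz
  set C₂ : ℝ := (2 * B + 1) / r ^ 2 with hC₂def
  have hC₂pos : 0 < C₂ := by rw [hC₂def]; positivity
  have hC₂r : C₂ * r ^ 2 = 2 * B + 1 := by
    rw [hC₂def]; field_simp
  have hψc : ContDiff ℝ 2 (fun y => (fun _ => (0:ℝ)) y + C₂ * sqfn x₀ y) :=
    contDiff_const.add (contDiff_const.mul (contDiff_sqfn x₀))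
  set ψ : EucV n → ℝ := fun y => (fun _ => (0:ℝ)) y + C₂ * sqfn x₀ y with hψdef
  clear_value ψ
  have hψy : ∀ y, ψ y = C₂ * sqfn x₀ y := fun y => by rw [hψdef]; simp
  have hψz : ψ x₀ = 0 := by rw [hψy x₀, sqfn_self, mul_zero]
  have hGcont : ContinuousOn (fun x => F x (gradV ψ x) (hessM ψ x)) (closure Ω) :=
    hF2.comp ((continuous_id.prodMk
      ((continuous_gradV hψc).prodMk (continuous_hessM hψc))).continuousOn)
      (fun x hx => ⟨hx, trivial⟩)
  obtain ⟨C₃, hC₃⟩ := hK.exists_bound_of_continuousOn hGcont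
  have hupp : ∀ lam : ℝ, 0 < lam → lam ≤ 1 → lam * vfam lam x₀ ≤ C₃ + B := by
    intro lam hlam hlam1
    obtain ⟨xs, hxs, hxsmax⟩ := hK.exists_isMaxOn hKne
      ((hSLS lam hlam).1.sub hψc.continuous.continuousOn)
    have hxsball : xs ∈ Metric.ball x₀ r := by
      by_contra hcon
      have hex : ∃ i, r ≤ dist (xs i) (x₀ i) := by
        by_contra hc; push_neg at hc
        exact hcon (mem_ball.mpr ((dist_pi_lt_iff hrpos).mpr hc))
      obtain ⟨i, hi⟩ := hex
      have hsq : r ^ 2 ≤ sqfn x₀ xs := by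
        have habs : r ≤ |xs i - x₀ i| := by rwa [Real.dist_eq] at hi
        calc r ^ 2 ≤ |xs i - x₀ i| ^ 2 := pow_le_pow_left₀ hrpos.le habs 2
          _ = (xs i - x₀ i) ^ 2 := sq_abs _
          _ ≤ sqfn x₀ xs := Finset.single_le_sum (f := fun j => (xs j - x₀ j) ^ 2)
              (fun j _ => sq_nonneg _) (Finset.mem_univ i)
      have hψxs : 2 * B + 1 ≤ ψ xs := by
        rw [hψy xs, ← hC₂r]
        exact mul_le_mul_of_nonneg_left hsq hC₂pos.le
      have hmax := hxsmax hx₀K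
      have hb1 := abs_le.mp (hB lam hlam xs hxs)
      have hb2 : |vfam lam x₀ - vfam lam x₀| ≤ B := by simpa using hB0
      have hmax' : vfam lam x₀ - ψ x₀ ≤ vfam lam xs - ψ xs := hmax
      rw [hψz] at hmax'
      linarith [hb1.2]
    have hxsΩ : xs ∈ Ω := hball_sub hxsball
    have h := (hSLS lam hlam).2.1 ψ hψc xs hxsΩ hxsmax.localize
    have h2 : lam * vfam lam xs + F xs (gradV ψ xs) (hessM ψ xs) ≤ 0 := by simpa using h
    have hFb := (abs_le.mp (by simpa [Real.norm_eq_abs] using hC₃ xs hxs)).1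
    have hvb := abs_le.mp (hB lam hlam xs hxs)
    have e1 : lam * vfam lam x₀ ≤ lam * (vfam lam xs + B) :=
      mul_le_mul_of_nonneg_left (by linarith [hvb.1]) hlam.le
    have e2 : lam * (vfam lam xs + B) = lam * vfam lam xs + lam * B := by ring
    have e3 : lam * B ≤ B := by nlinarith
    linarith
  -- vanishing discount sequence
  set μ : ℕ → ℝ := fun k => 1 / ((k : ℝ) + 1) with hμdef
  have hμpos : ∀ k, 0 < μ k := fun k => by rw [hμdef]; positivity
  have hμle1 : ∀ k, μ k ≤ 1 := fun k => by
    rw [hμdef]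
    rw [div_le_one (by positivity)]
    have : (0:ℝ) ≤ (k:ℝ) := Nat.cast_nonneg k
    linarith
  have hμ0 : Tendsto μ atTop (𝓝 0) := by
    rw [hμdef]; exact tendsto_one_div_add_atTop_nhds_zero_nat
  clear_value μ
  haveI : CompactSpace (closure Ω : Set (EucV n)) := isCompact_iff_compactSpace.mp hK
  have hcontk : ∀ k : ℕ,
      Continuous ((closure Ω).restrict (fun x => vfam (μ k) x - vfam (μ k) x₀)) :=
    fun k => continuousOn_iff_continuous_restrict.mp
      (((hSLS (μ k) (hμpos k)).1).sub continuousOn_const)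
  set f : ℕ → BoundedContinuousFunction (closure Ω : Set (EucV n)) ℝ :=
    fun k => BoundedContinuousFunction.mkOfCompact ⟨_, hcontk k⟩ with hfdef
  have hfval : ∀ k (p : (closure Ω : Set (EucV n))),
      f k p = vfam (μ k) p.1 - vfam (μ k) x₀ := fun k p => rfl
  have hin_s : ∀ g ∈ Set.range f, ∀ p : (closure Ω : Set (EucV n)), g p ∈ Icc (-B) B := by
    rintro g ⟨k, rfl⟩ p
    have h := abs_le.mp (hB (μ k) (hμpos k) p.1 p.2)
    rw [hfval]
    exact ⟨h.1, h.2⟩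
  have hEquic : Equicontinuous ((↑) : ↥(Set.range f) → ↥(closure Ω) → ℝ) := by
    intro p
    rw [Metric.equicontinuousAt_iff]
    intro ε hε
    obtain ⟨δ, hδpos, hδ⟩ := hEC ε hε
    refine ⟨δ, hδpos, fun q hq i => ?_⟩
    obtain ⟨g, k, rfl⟩ := i
    show dist (f k p) (f k q) < ε
    rw [Real.dist_eq, hfval, hfval]
    have hd : dist p.1 q.1 < δ := by
      rw [← Subtype.dist_eq, dist_comm]; exact hq
    have h := hδ (μ k) (hμpos k) p.1 p.2 q.1 q.2 hd
    have heq : vfam (μ k) p.1 - vfam (μ k) x₀ - (vfam (μ k) q.1 - vfam (μ k) x₀)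
        = vfam (μ k) p.1 - vfam (μ k) q.1 := by ring
    rw [heq]; exact h
  have hAA : IsCompact (closure (Set.range f)) :=
    BoundedContinuousFunction.arzela_ascoli (Icc (-B) B) isCompact_Icc (Set.range f)
      (fun g p hg => hin_s g hg p) hEquic
  have hPmem : ∀ k, ((f k, μ k * vfam (μ k) x₀) :
      BoundedContinuousFunction (closure Ω : Set (EucV n)) ℝ × ℝ)
        ∈ (closure (Set.range f)) ×ˢ Icc (-C₀) (C₃ + B) :=
    fun k => ⟨subset_closure (Set.mem_range_self k),
      ⟨hlow (μ k) (hμpos k), hupp (μ k) (hμpos k) (hμle1 k)⟩⟩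
  obtain ⟨⟨U, slim⟩, hUS, φ, hφmono, hφtend⟩ :=
    (hAA.prod isCompact_Icc).tendsto_subseq hPmem
  have hfU : Tendsto (fun j => f (φ j)) atTop (𝓝 U) := by
    have h := (continuous_fst.tendsto ((U, slim) :
      BoundedContinuousFunction (closure Ω : Set (EucV n)) ℝ × ℝ)).comp hφtend
    exact h
  have hst : Tendsto (fun j => μ (φ j) * vfam (μ (φ j)) x₀) atTop (𝓝 slim) := by
    have h := (continuous_snd.tendsto ((U, slim) :
      BoundedContinuousFunction (closure Ω : Set (EucV n)) ℝ × ℝ)).comp hφtend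
    exact h
  classical
  set u : EucV n → ℝ := fun x => if h : x ∈ closure Ω then U ⟨x, h⟩ else 0 with hudef
  have huval : ∀ (x : EucV n) (h : x ∈ closure Ω), u x = U ⟨x, h⟩ := fun x h => by
    rw [hudef]; exact dif_pos h
  have huc : ContinuousOn u (closure Ω) := by
    rw [continuousOn_iff_continuous_restrict]
    have heq : (closure Ω).restrict u = ⇑U := by
      funext p
      show u p.1 = U p
      rw [huval p.1 p.2]
    exact (show Continuous ((closure Ω).restrict u) by rw [heq]; exact U.continuous)
  have hunif : ∀ ε : ℝ, 0 < ε → ∀ᶠ j in atTop, ∀ x ∈ closure Ω,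
      |vfam (μ (φ j)) x - vfam (μ (φ j)) x₀ - u x| < ε := by
    intro ε hε
    obtain ⟨N, hN⟩ := Metric.tendsto_atTop.mp hfU ε hε
    rw [eventually_atTop]
    refine ⟨N, fun j hj x hx => ?_⟩
    have h1 : dist (f (φ j) ⟨x, hx⟩) (U ⟨x, hx⟩) ≤ dist (f (φ j)) U :=
      BoundedContinuousFunction.dist_coe_le_dist _
    have h2 := hN j hj
    have heq : |vfam (μ (φ j)) x - vfam (μ (φ j)) x₀ - u x|
        = dist (f (φ j) ⟨x, hx⟩) (U ⟨x, hx⟩) := by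
      rw [Real.dist_eq, hfval, huval x hx]
    rw [heq]
    exact lt_of_le_of_lt h1 h2
  have hts : Tendsto (fun j => μ (φ j) * vfam (μ (φ j)) x₀) atTop (𝓝 (-(-slim))) := by
    rw [neg_neg]; exact hst
  refine ⟨u, -slim, huc, ?_, ?_⟩
  · exact stab_sub Ω F hΩo hF2 (fun j => μ (φ j)) (fun j => hμpos _)
      (hμ0.comp hφmono.tendsto_atTop)
      (fun j => vfam (μ (φ j))) (fun j => (hSLS _ (hμpos _)).1)
      (fun j => (hSLS _ (hμpos _)).2.1)
      (fun j => vfam (μ (φ j)) x₀) (-slim) hts u huc hunif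
  · exact stab_sup Ω F hF2 (fun j => μ (φ j))
      (hμ0.comp hφmono.tendsto_atTop)
      (fun j => vfam (μ (φ j))) (fun j => (hSLS _ (hμpos _)).1)
      (fun j => (hSLS _ (hμpos _)).2.2)
      (fun j => vfam (μ (φ j)) x₀) (-slim) hts u huc hunif

end AuxProof

/-- Proposition 3.1: existence of a solution of the state constraint ergodic problem
(ES), and the representation of the (unique) critical value `c_S`. -/
theorem stmt3 {n : ℕ} {A : Type*} [MetricSpace A] [Nonempty A]
    [SigmaCompactSpace A] [LocallyCompactSpace A]
    (Ω : Set (EucV n)) (hΩ : BoundedDomain Ω)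
    (a : EucV n → A → Matrix (Fin n) (Fin n) ℝ) (b : EucV n → A → EucV n)
    (L : EucV n → A → ℝ) (F : Op n)
    (hdata : CondData Ω a b L) (hF1 : CondF1 Ω a b L F) (hF2 : CondF2 Ω F)
    (hCPS : CondCPS Ω F)
    (vfam : ℝ → EucV n → ℝ) (hSLS : CondSLS Ω F vfam) (hEC : CondEC Ω vfam) :
    (∃ (u : EucV n → ℝ) (c : ℝ), ContinuousOn u (closure Ω) ∧ SolES Ω F c u) ∧
      ∀ c : ℝ, (∃ u : EucV n → ℝ, ContinuousOn u (closure Ω) ∧ SolES Ω F c u) →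
        c = sInf {d : ℝ | ∃ v : EucV n → ℝ, ContinuousOn v (closure Ω) ∧
              SubsolOn (closure Ω) Ω 0 F (fun _ => d) v} := by
  constructor
  · exact exists_solES Ω F hΩ hF2 vfam hSLS hEC
  · rintro c ⟨u, huc, hsubU, hsupU⟩
    have hK : IsCompact (closure Ω) := hΩ.2.2.isCompact_closure
    obtain ⟨x₀, hx₀⟩ := hΩ.2.1.nonempty
    have hKne : (closure Ω).Nonempty := ⟨x₀, subset_closure hx₀⟩
    have hmem : c ∈ {d : ℝ | ∃ v : EucV n → ℝ, ContinuousOn v (closure Ω) ∧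
        SubsolOn (closure Ω) Ω 0 F (fun _ => d) v} := ⟨u, huc, hsubU⟩
    have hlb : ∀ d ∈ {d : ℝ | ∃ v : EucV n → ℝ, ContinuousOn v (closure Ω) ∧
        SubsolOn (closure Ω) Ω 0 F (fun _ => d) v}, c ≤ d := by
      rintro d ⟨v, hvc, hvsub⟩
      exact crit_le Ω F hK hKne hCPS c d u v huc hvc hsupU hvsub
    exact le_antisymm (le_csInf ⟨c, hmem⟩ hlb) (csInf_le ⟨c, fun d hd => hlb d hd⟩ hmem)
end
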